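/- arXiv:1804.01327 — 8 statements merged into one kernel-verified Lean document; each statement's English description precedes it below -/
import Mathlib

section
/- Let A_0,...,A_m be real symmetric n×n matrices and A(y) = A_0 - Σ_{i=1}^m y_i A_i. Then either for every ε > 0 there exists y ∈ ℝ^m with A(y) + ε·Id positive semidefinite, or there exists a positive semidefinite matrix X with ⟨A_i, X⟩ = 0 for all i ∈ [m] and ⟨A_0, X⟩ = -1. -/
open Matrix

theorem stmt_0 (n m : ℕ) (A0 : Matrix (Fin n) (Fin n) ℝ)
    (A : Fin m → Matrix (Fin n) (Fin n) ℝ)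
    (hA0 : A0.IsSymm) (hA : ∀ i, (A i).IsSymm) :
    (∀ ε : ℝ, 0 < ε → ∃ y : Fin m → ℝ,
      ((A0 - ∑ i, y i • A i) + ε • (1 : Matrix (Fin n) (Fin n) ℝ)).PosSemidef) ∨
    (∃ X : Matrix (Fin n) (Fin n) ℝ, X.PosSemidef ∧
      (∀ i, ((A i)ᵀ * X).trace = 0) ∧ (A0ᵀ * X).trace = -1) := by
  by_cases hL : (∀ ε : ℝ, 0 < ε → ∃ y : Fin m → ℝ,
      ((A0 - ∑ i, y i • A i) + ε • (1 : Matrix (Fin n) (Fin n) ℝ)).PosSemidef)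
  · exact Or.inl hL
  right
  push_neg at hL
  obtain ⟨ε, hε, hno⟩ := hL
  classical
  -- the quadratic form
  set Q : Matrix (Fin n) (Fin n) ℝ → (Fin n → ℝ) → ℝ :=
    fun M x => x ⬝ᵥ (M *ᵥ x) + ε * (x ⬝ᵥ x) with hQdef
  set s : Set (Matrix (Fin n) (Fin n) ℝ) :=
    {M | ∀ x : Fin n → ℝ, x ≠ 0 → 0 < Q M x} with hsdef
  set t : Set (Matrix (Fin n) (Fin n) ℝ) :=
    Set.range (fun y : Fin m → ℝ => A0 - ∑ i, y i • A i) with htdef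
  have hdotpos : ∀ x : Fin n → ℝ, x ≠ 0 → 0 < x ⬝ᵥ x := by
    intro x hx
    obtain ⟨i, hi⟩ := Function.ne_iff.mp hx
    refine Finset.sum_pos' (fun j _ => mul_self_nonneg _) ⟨i, Finset.mem_univ i, ?_⟩
    exact mul_self_pos.mpr hi
  have hone : (1 : Matrix (Fin n) (Fin n) ℝ) ∈ s := by
    intro x hx
    have h := hdotpos x hx
    simp only [hQdef, one_mulVec]
    nlinarith
  have hconvs : Convex ℝ s := by
    intro M hM N hN a b ha hb hab
    intro x hx
    have hQab : Q (a • M + b • N) x = a * Q M x + b * Q N x := by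
      simp only [hQdef, add_mulVec, smul_mulVec, dotProduct_add,
        dotProduct_smul, smul_eq_mul]
      linear_combination (-(ε * (x ⬝ᵥ x))) * hab
    rw [hQab]
    rcases eq_or_lt_of_le ha with h | h
    · have hb1 : b = 1 := by linarith
      simp [← h, hb1]
      exact hN x hx
    · have h1 : 0 < a * Q M x := mul_pos h (hM x hx)
      have h2 : 0 ≤ b * Q N x := mul_nonneg hb (le_of_lt (hN x hx))
      linarith
  have hconvt : Convex ℝ t := by
    rintro p ⟨y1, rfl⟩ q ⟨y2, rfl⟩ a b ha hb hab
    refine ⟨a • y1 + b • y2, ?_⟩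
    have hsum : ∑ i, (a • y1 + b • y2) i • A i
        = a • (∑ i, y1 i • A i) + b • (∑ i, y2 i • A i) := by
      rw [Finset.smul_sum, Finset.smul_sum, ← Finset.sum_add_distrib]
      refine Finset.sum_congr rfl fun i _ => ?_
      simp [add_smul, smul_smul]
    have hA0' : a • A0 + b • A0 = A0 := by rw [← add_smul, hab, one_smul]
    show A0 - ∑ i, (a • y1 + b • y2) i • A i
        = a • (A0 - ∑ i, y1 i • A i) + b • (A0 - ∑ i, y2 i • A i)
    rw [hsum, smul_sub, smul_sub]
    conv_lhs => rw [← hA0']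
    abel
  have hopen : IsOpen s := by
    rw [← isClosed_compl_iff]
    haveI : CompactSpace ↥(Metric.sphere (0 : Fin n → ℝ) 1) :=
      isCompact_iff_compactSpace.mp (isCompact_sphere 0 1)
    have hscale : ∀ (M : Matrix (Fin n) (Fin n) ℝ) (x : Fin n → ℝ) (c : ℝ),
        Q M (c • x) = c ^ 2 * Q M x := by
      intro M x c
      simp only [hQdef, mulVec_smul, smul_dotProduct, dotProduct_smul, smul_eq_mul]
      ring
    have himg : sᶜ = Prod.snd ''
        {p : ↥(Metric.sphere (0 : Fin n → ℝ) 1) × Matrix (Fin n) (Fin n) ℝ |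
          Q p.2 ↑p.1 ≤ 0} := by
      ext M
      simp only [Set.mem_compl_iff, hsdef, Set.mem_setOf_eq, Set.mem_image]
      constructor
      · intro h
        push_neg at h
        obtain ⟨x, hx0, hxle⟩ := h
        have hxn : ‖x‖ ≠ 0 := norm_ne_zero_iff.mpr hx0
        refine ⟨⟨⟨‖x‖⁻¹ • x, ?_⟩, M⟩, ?_, rfl⟩
        · rw [mem_sphere_zero_iff_norm, norm_smul, norm_inv, norm_norm,
            inv_mul_cancel₀ hxn]
        · show Q M (‖x‖⁻¹ • x) ≤ 0
          rw [hscale]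
          exact mul_nonpos_of_nonneg_of_nonpos (sq_nonneg _) hxle
      · rintro ⟨⟨⟨x, hx⟩, M'⟩, hle, rfl⟩
        intro hall
        have hx0 : x ≠ 0 := by
          rw [mem_sphere_zero_iff_norm] at hx
          intro h
          rw [h, norm_zero] at hx
          norm_num at hx
        exact absurd (hall x hx0) (not_lt.mpr hle)
    rw [himg]
    apply isClosedMap_snd_of_compactSpace
    have hc : Continuous fun p : ↥(Metric.sphere (0 : Fin n → ℝ) 1) ×
        Matrix (Fin n) (Fin n) ℝ => Q p.2 ↑p.1 := by
      simp only [hQdef, dotProduct, mulVec]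
      apply Continuous.add
      · apply continuous_finset_sum
        intro i _
        apply Continuous.mul
        · exact (continuous_apply i).comp (continuous_subtype_val.comp continuous_fst)
        · apply continuous_finset_sum
          intro j _
          exact ((continuous_apply j).comp ((continuous_apply i).comp
            continuous_snd)).mul ((continuous_apply j).comp
            (continuous_subtype_val.comp continuous_fst))
      · apply Continuous.mul continuous_const
        apply continuous_finset_sum
        intro i _
        exact ((continuous_apply i).comp (continuous_subtype_val.comp
          continuous_fst)).mul ((continuous_apply i).comp
          (continuous_subtype_val.comp continuous_fst))
    exact isClosed_le hc continuous_const
  have hdisj : Disjoint s t := by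
    rw [Set.disjoint_left]
    rintro M hMs ⟨y, rfl⟩
    refine hno y (PosSemidef.of_dotProduct_mulVec_nonneg ?_ ?_)
    · -- Hermitian
      have hsym : (A0 - ∑ i, y i • A i + ε • 1)ᵀ = A0 - ∑ i, y i • A i + ε • 1 := by
        rw [transpose_add, transpose_sub, transpose_sum, hA0.eq, transpose_smul,
          transpose_one]
        congr 2
        exact Finset.sum_congr rfl fun i _ => by rw [transpose_smul, (hA i).eq]
      show _ᴴ = _
      rw [conjTranspose_eq_transpose_of_trivial]
      exact hsym
    · intro x
      by_cases hx : x = 0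
      · simp [hx]
      · have h := hMs x hx
        simp only [hQdef] at h
        have hrw : star x ⬝ᵥ ((A0 - ∑ i, y i • A i) + ε • 1) *ᵥ x
            = x ⬝ᵥ ((A0 - ∑ i, y i • A i) *ᵥ x) + ε * (x ⬝ᵥ x) := by
          rw [star_trivial, add_mulVec, smul_mulVec, one_mulVec,
            dotProduct_add, dotProduct_smul, smul_eq_mul]
        rw [hrw]
        linarith
  obtain ⟨f, u, hfs, hft⟩ := geometric_hahn_banach_open hconvs hopen hconvt hdisj
  have hfA0 : u ≤ f A0 := by
    have h := hft A0 ⟨0, by simp⟩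
    exact h
  have hfi : ∀ i, f (A i) = 0 := by
    intro i
    by_contra hne
    set c : ℝ := (f A0 - u + 1) / f (A i) with hcdef
    have hmem : (A0 - c • A i) ∈ t := by
      refine ⟨fun j => if j = i then c else 0, ?_⟩
      congr 1
      simp [ite_smul]
    have h := hft _ hmem
    rw [map_sub, _root_.map_smul, smul_eq_mul, hcdef, div_mul_cancel₀ _ hne] at h
    linarith
  have hsmem : ∀ (x : Fin n → ℝ) (τ δ : ℝ), 0 ≤ τ → 0 < δ →
      (τ • vecMulVec x x + (δ - ε) • 1) ∈ s := by
    intro x τ δ hτ hδ z hz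
    have hvmv : (vecMulVec x x) *ᵥ z = (x ⬝ᵥ z) • x := by
      funext i
      simp only [mulVec, dotProduct, vecMulVec_apply, Pi.smul_apply, smul_eq_mul,
        Finset.sum_mul, Finset.mul_sum]
      exact Finset.sum_congr rfl fun j _ => by ring
    have : Q (τ • vecMulVec x x + (δ - ε) • 1) z
        = τ * (x ⬝ᵥ z) ^ 2 + δ * (z ⬝ᵥ z) := by
      simp only [hQdef, add_mulVec, smul_mulVec, one_mulVec, dotProduct_add,
        dotProduct_smul, smul_eq_mul, hvmv, dotProduct_smul]
      have hcomm : z ⬝ᵥ x = x ⬝ᵥ z := dotProduct_comm z x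
      rw [hcomm]
      ring
    rw [this]
    have h1 : 0 ≤ τ * (x ⬝ᵥ z) ^ 2 := mul_nonneg hτ (sq_nonneg _)
    have h2 : 0 < δ * (z ⬝ᵥ z) := mul_pos hδ (hdotpos z hz)
    linarith
  have hfP : ∀ x : Fin n → ℝ, f (vecMulVec x x) ≤ 0 := by
    intro x
    by_contra hpos
    push_neg at hpos
    set τ : ℝ := (|u| + 1) / f (vecMulVec x x) with hτdef
    have hτ : 0 < τ := div_pos (by positivity) hpos
    have h := hfs _ (hsmem x τ ε hτ.le hε)
    rw [map_add, _root_.map_smul, _root_.map_smul, smul_eq_mul, smul_eq_mul,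
      sub_self, zero_mul, add_zero, hτdef, div_mul_cancel₀ _ (ne_of_gt hpos)] at h
    have := le_abs_self u
    linarith
  have hfI : -ε * f 1 ≤ u := by
    have key : ∀ δ : ℝ, 0 < δ → (δ - ε) * f 1 < u := by
      intro δ hδ
      have h := hfs _ (hsmem 0 0 δ le_rfl hδ)
      simpa using h
    by_contra h
    push_neg at h
    rcases le_or_gt 0 (f 1) with h1 | h1
    · have h2 := key ε hε
      have h3 : 0 ≤ ε * f 1 := mul_nonneg hε.le h1
      simp only [sub_self, zero_mul] at h2
      linarith
    · set δ : ℝ := (u + ε * f 1) / f 1 with hδdef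
      have hnum : u + ε * f 1 < 0 := by nlinarith
      have hδpos : 0 < δ := div_pos_of_neg_of_neg hnum h1
      have h2 := key δ hδpos
      rw [sub_mul, hδdef, div_mul_cancel₀ _ (ne_of_lt h1)] at h2
      linarith
  -- represent f by a matrix
  set X0 : Matrix (Fin n) (Fin n) ℝ :=
    Matrix.of (fun i j => f (single i j 1)) with hX0def
  have hf_eq : ∀ M : Matrix (Fin n) (Fin n) ℝ, f M = ∑ i, ∑ j, M i j * X0 i j := by
    intro M
    conv_lhs => rw [matrix_eq_sum_single M]
    rw [map_sum]
    refine Finset.sum_congr rfl fun i _ => ?_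
    rw [map_sum]
    refine Finset.sum_congr rfl fun j _ => ?_
    have hsb : single i j (M i j) = M i j • single i j 1 := by
      rw [smul_single, smul_eq_mul, mul_one]
    rw [hsb, _root_.map_smul, smul_eq_mul]
    rfl
  have hswap : ∀ B : Matrix (Fin n) (Fin n) ℝ, f Bᵀ = ∑ i, ∑ j, B i j * X0 j i := by
    intro B
    rw [hf_eq, Finset.sum_comm]
    exact Finset.sum_congr rfl fun i _ => Finset.sum_congr rfl fun j _ => by
      simp [transpose_apply]
  set Y : Matrix (Fin n) (Fin n) ℝ := -(X0 + X0ᵀ) with hYdef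
  have hYapp : ∀ i j, Y i j = -(X0 i j + X0 j i) := by
    intro i j
    simp [hYdef]
  have hYA : ∀ B : Matrix (Fin n) (Fin n) ℝ,
      (∑ i, ∑ j, B i j * Y i j) = -(f B + f Bᵀ) := by
    intro B
    rw [hf_eq B, hswap B]
    have hterm : ∀ i j, B i j * Y i j = -(B i j * X0 i j) + -(B i j * X0 j i) :=
      fun i j => by rw [hYapp]; ring
    simp only [hterm, Finset.sum_add_distrib, Finset.sum_neg_distrib]
    ring
  have htr : ∀ B C : Matrix (Fin n) (Fin n) ℝ,
      (Bᵀ * C).trace = ∑ i, ∑ j, B i j * C i j := by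
    intro B C
    rw [Matrix.trace]
    simp only [Matrix.diag, Matrix.mul_apply, transpose_apply]
    exact Finset.sum_comm
  have hvvsymm : ∀ x : Fin n → ℝ, (vecMulVec x x)ᵀ = vecMulVec x x := by
    intro x
    ext i j
    simp [vecMulVec_apply, mul_comm]
  have hYpsd : Y.PosSemidef := by
    refine PosSemidef.of_dotProduct_mulVec_nonneg ?_ ?_
    · show Yᴴ = Y
      ext i j
      simp only [conjTranspose_apply, star_trivial, hYapp]
      ring
    · intro x
      rw [star_trivial]
      have h1 : x ⬝ᵥ (Y *ᵥ x) = ∑ i, ∑ j, (vecMulVec x x) i j * Y i j := by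
        simp only [dotProduct, mulVec, vecMulVec_apply, Finset.mul_sum]
        exact Finset.sum_congr rfl fun i _ => Finset.sum_congr rfl fun j _ => by ring
      rw [h1, hYA, hvvsymm]
      have := hfP x
      linarith
  have hf1 : f 1 = ∑ i, X0 i i := by
    rw [hf_eq]
    simp [one_apply, ite_mul]
  have htrY : Y.trace = -(2 * f 1) := by
    rw [Matrix.trace, hf1]
    simp only [Matrix.diag, hYapp]
    have hterm : ∀ i : Fin n, -(X0 i i + X0 i i) = (-2 : ℝ) * X0 i i :=
      fun i => by ring
    simp only [hterm, ← Finset.mul_sum]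
    ring
  have htrA0 : (A0ᵀ * Y).trace = -(2 * f A0) := by
    rw [htr, hYA, hA0.eq]
    ring
  have htrA : ∀ i, ((A i)ᵀ * Y).trace = 0 := by
    intro i
    rw [htr, hYA, (hA i).eq, hfi]
    ring
  have hYne : Y ≠ 0 := by
    intro h0
    have h1 : f 1 = 0 := by
      have := htrY
      rw [h0, trace_zero] at this
      linarith
    have h2 : f A0 = 0 := by
      have := htrA0
      rw [h0, Matrix.mul_zero, trace_zero] at this
      linarith
    have h3 := hfs 1 hone
    rw [h1] at h3
    linarith [hfA0, h2]
  have htrYpos : 0 < Y.trace := by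
    have hdiag : ∀ i, 0 ≤ Y i i := by
      intro i
      have h := hYpsd.dotProduct_mulVec_nonneg (Pi.single i 1)
      have hrw : star (Pi.single i 1 : Fin n → ℝ) ⬝ᵥ Y *ᵥ Pi.single i 1 = Y i i := by
        rw [star_trivial, mulVec_single, single_dotProduct]
        simp
      rwa [hrw] at h
    have hnn : 0 ≤ Y.trace := Finset.sum_nonneg fun i _ => hdiag i
    rcases eq_or_lt_of_le hnn with h0 | h0
    · exfalso
      obtain ⟨B, hB⟩ : ∃ B : Matrix (Fin n) (Fin n) ℝ, Y = Bᴴ * B := by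
        open scoped MatrixOrder in exact CStarAlgebra.nonneg_iff_eq_star_mul_self.mp hYpsd.nonneg
      have htrB : Y.trace = ∑ p : Fin n × Fin n, B p.2 p.1 * B p.2 p.1 := by
        rw [hB, Matrix.trace]
        simp only [Matrix.diag, Matrix.mul_apply, conjTranspose_apply, star_trivial]
        rw [← Finset.sum_product', Finset.univ_product_univ]
      have hz : ∀ p ∈ Finset.univ (α := Fin n × Fin n), B p.2 p.1 * B p.2 p.1 = 0 := by
        rw [← Finset.sum_eq_zero_iff_of_nonneg fun p _ => mul_self_nonneg _]
        rw [← htrB, ← h0]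
      have hB0 : B = 0 := by
        ext i j
        exact mul_self_eq_zero.mp (hz (j, i) (Finset.mem_univ _))
      apply hYne
      rw [hB, hB0]
      simp
    · exact h0
  have hgneg : (A0ᵀ * Y).trace < 0 := by
    rw [htrA0]
    have h1 : ε * Y.trace > 0 := mul_pos hε htrYpos
    nlinarith [hfI, hfA0, htrY]
  set g : ℝ := (A0ᵀ * Y).trace with hgdef
  have hgne : -g ≠ 0 := by
    intro h
    rw [neg_eq_zero] at h
    exact absurd h (ne_of_lt hgneg)
  have hcnn : 0 ≤ (-g)⁻¹ := inv_nonneg.mpr (by linarith)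
  refine ⟨(-g)⁻¹ • Y, PosSemidef.of_dotProduct_mulVec_nonneg ?_ ?_, ?_, ?_⟩
  · show _ᴴ = _
    rw [conjTranspose_smul, hYpsd.1.eq]
    congr 1
  · intro x
    rw [smul_mulVec, dotProduct_smul, smul_eq_mul]
    exact mul_nonneg hcnn (hYpsd.dotProduct_mulVec_nonneg x)
  · intro i
    rw [Matrix.mul_smul, trace_smul, htrA i]
    simp
  · rw [Matrix.mul_smul, trace_smul, smul_eq_mul, ← hgdef]
    field_simp [neg_ne_zero.mp hgne]
end

section
/- Let A_0,...,A_m be real symmetric n×n matrices and suppose there exists a positive definite matrix X̄ with ⟨A_i, X̄⟩ = 0 for all i ∈ [m]. Then either there exists y ∈ ℝ^m with A(y) = A_0 - Σ y_i A_i positive semidefinite, or there exists a positive semidefinite X with ⟨A_i, X⟩ = 0 for all i ∈ [m] and ⟨A_0, X⟩ = -1. -/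
open Matrix

open scoped MatrixOrder in
private lemma psd_eq_ct_mul_self {n : ℕ} {Q : Matrix (Fin n) (Fin n) ℝ} (hQ : Q.PosSemidef) :
    ∃ C : Matrix (Fin n) (Fin n) ℝ, Q = Cᴴ * C := by
  obtain ⟨C, hC⟩ := CStarAlgebra.nonneg_iff_eq_star_mul_self.mp hQ.nonneg
  exact ⟨C, hC⟩

attribute [local instance] Matrix.normedAddCommGroup Matrix.normedSpace

section SDPAux
variable {n : ℕ}
local notation "E" => Matrix (Fin n) (Fin n) ℝ

private noncomputable def trLM (X : E) : E →ₗ[ℝ] ℝ where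
  toFun M := (Xᵀ * M).trace
  map_add' M N := by simp [mul_add]
  map_smul' c M := by simp [Matrix.mul_smul]

private lemma trLM_apply (X M : E) : trLM X M = (Xᵀ * M).trace := rfl

private lemma trace_pair_eq_sum (X M : E) :
    (Xᵀ * M).trace = ∑ i : Fin n, ∑ j : Fin n, X i j * M i j := by
  simp only [trace, diag, mul_apply, transpose_apply]
  rw [Finset.sum_comm]

private lemma trace_tmul_self_nonneg (B : E) : 0 ≤ (Bᵀ * B).trace := by
  rw [trace_pair_eq_sum]
  exact Finset.sum_nonneg fun i _ => Finset.sum_nonneg fun j _ => mul_self_nonneg _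

private lemma psd_smul {c : ℝ} (hc : 0 ≤ c) {Q : E} (hQ : Q.PosSemidef) :
    (c • Q).PosSemidef := by
  refine posSemidef_iff_dotProduct_mulVec.mpr ⟨?_, fun x => ?_⟩
  · unfold Matrix.IsHermitian
    rw [conjTranspose_smul, hQ.1]
    simp
  · rw [smul_mulVec, dotProduct_smul, smul_eq_mul]
    exact mul_nonneg hc (hQ.dotProduct_mulVec_nonneg x)

private lemma quad_diag (C M : E) (i : Fin n) :
    (C * M * Cᵀ) i i = (C i) ⬝ᵥ (M *ᵥ C i) := by
  simp only [mul_apply, transpose_apply, dotProduct, mulVec, Finset.sum_mul, Finset.mul_sum]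
  rw [Finset.sum_comm]
  refine Finset.sum_congr rfl fun k _ => Finset.sum_congr rfl fun j _ => by ring

private lemma pd_pair_pos {Xbar Q : E} (hX : Xbar.PosDef) (hQ : Q.PosSemidef) (h0 : Q ≠ 0) :
    0 < (Xbarᵀ * Q).trace := by
  have hXt : Xbarᵀ = Xbar := by
    rw [← conjTranspose_eq_transpose_of_trivial, hX.1]
  obtain ⟨C, hC⟩ : ∃ C : E, Q = Cᴴ * C := by
    exact psd_eq_ct_mul_self hQ
  rw [conjTranspose_eq_transpose_of_trivial] at hC
  subst hC
  rw [hXt, ← Matrix.mul_assoc, Matrix.trace_mul_cycle]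
  have hterm : ∀ i, (C * Xbar * Cᵀ) i i = (C i) ⬝ᵥ (Xbar *ᵥ C i) := quad_diag C Xbar
  have hnn : ∀ i ∈ Finset.univ, 0 ≤ (C * Xbar * Cᵀ).diag i := by
    intro i _
    rw [diag_apply, hterm i]
    have := hX.posSemidef.dotProduct_mulVec_nonneg (C i)
    simpa using this
  have hex : ∃ i, C i ≠ 0 := by
    by_contra h
    push_neg at h
    apply h0
    have : C = 0 := by ext i j; exact congrFun (h i) j
    simp [this]
  obtain ⟨i, hi⟩ := hex
  have hpos : 0 < (C * Xbar * Cᵀ).diag i := by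
    rw [diag_apply, hterm i]
    have := hX.dotProduct_mulVec_pos hi
    simpa using this
  exact Finset.sum_pos' hnn ⟨i, Finset.mem_univ i, hpos⟩

private noncomputable def ctLM : E →ₗ[ℝ] E where
  toFun M := Mᴴ
  map_add' M N := conjTranspose_add M N
  map_smul' c M := by simp

private noncomputable def quadLM (x : Fin n → ℝ) : E →ₗ[ℝ] ℝ where
  toFun M := x ⬝ᵥ (M *ᵥ x)
  map_add' M N := by simp [add_mulVec, dotProduct_add]
  map_smul' c M := by simp [smul_mulVec, dotProduct_smul]

private lemma isClosed_psd : IsClosed {M : E | M.PosSemidef} := by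
  have : {M : E | M.PosSemidef}
      = {M : E | Mᴴ = M} ∩ ⋂ x : Fin n → ℝ, {M : E | 0 ≤ x ⬝ᵥ (M *ᵥ x)} := by
    ext M
    simp only [Set.mem_setOf_eq, Set.mem_inter_iff, Set.mem_iInter]
    constructor
    · exact fun h => ⟨h.1, fun x => by simpa using h.dotProduct_mulVec_nonneg x⟩
    · exact fun h => posSemidef_iff_dotProduct_mulVec.mpr ⟨h.1, fun x => by simpa using h.2 x⟩
  rw [this]
  refine IsClosed.inter ?_ (isClosed_iInter fun x => ?_)
  · exact isClosed_eq (ctLM (n := n)).continuous_of_finiteDimensional continuous_id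
  · exact isClosed_le continuous_const (quadLM x).continuous_of_finiteDimensional

private lemma coercive {Xbar : E} (hX : Xbar.PosDef) :
    ∃ δ > (0:ℝ), ∀ Q : E, Q.PosSemidef → δ * ‖Q‖ ≤ (Xbarᵀ * Q).trace := by
  set S : Set E := {Q | Q.PosSemidef ∧ ‖Q‖ = 1} with hSdef
  have hnorm1 : ∀ Q : E, Q.PosSemidef → Q ≠ 0 → (‖Q‖⁻¹ • Q) ∈ S := by
    intro Q hQ h0
    have hn : ‖Q‖ ≠ 0 := norm_ne_zero_iff.mpr h0
    refine ⟨psd_smul (inv_nonneg.mpr (norm_nonneg _)) hQ, ?_⟩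
    rw [norm_smul, norm_inv, norm_norm, inv_mul_cancel₀ hn]
  by_cases hS : S.Nonempty
  · have hScomp : IsCompact S := by
      refine IsCompact.of_isClosed_subset (isCompact_closedBall (0:E) 1)
        (isClosed_psd.inter (isClosed_eq continuous_norm continuous_const)) ?_
      intro Q hQ
      rw [Metric.mem_closedBall, dist_zero_right, hQ.2]
    have hcont : Continuous fun Q : E => (Xbarᵀ * Q).trace :=
      (trLM Xbar).continuous_of_finiteDimensional
    obtain ⟨Q0, hQ0S, hmin⟩ := hScomp.exists_isMinOn hS hcont.continuousOn
    have hQ0ne : Q0 ≠ 0 := by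
      intro h; rw [h] at hQ0S; simpa using hQ0S.2
    refine ⟨(Xbarᵀ * Q0).trace, pd_pair_pos hX hQ0S.1 hQ0ne, fun Q hQ => ?_⟩
    rcases eq_or_ne Q 0 with rfl | h0
    · simp
    · have hn : (0:ℝ) < ‖Q‖ := norm_pos_iff.mpr h0
      have h2 : (Xbarᵀ * Q0).trace ≤ (Xbarᵀ * (‖Q‖⁻¹ • Q)).trace := hmin (hnorm1 Q hQ h0)
      rw [Matrix.mul_smul, trace_smul, smul_eq_mul] at h2
      rw [mul_comm]
      calc ‖Q‖ * (Xbarᵀ * Q0).trace ≤ ‖Q‖ * (‖Q‖⁻¹ * (Xbarᵀ * Q).trace) :=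
            mul_le_mul_of_nonneg_left h2 (le_of_lt hn)
        _ = (Xbarᵀ * Q).trace := by field_simp
  · refine ⟨1, one_pos, fun Q hQ => ?_⟩
    rcases eq_or_ne Q 0 with rfl | h0
    · simp
    · exact absurd ⟨_, hnorm1 Q hQ h0⟩ hS

private lemma isClosed_coneK {m : ℕ} (A : Fin m → E) {Xbar : E} (hX : Xbar.PosDef)
    (hXA : ∀ i, ((A i)ᵀ * Xbar).trace = 0) :
    IsClosed {M : E | ∃ B ∈ Submodule.span ℝ (Set.range A),
      ∃ Q : E, Q.PosSemidef ∧ M = B + Q} := by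
  set L := Submodule.span ℝ (Set.range A) with hL
  have hLvanish : ∀ B ∈ L, (Xbarᵀ * B).trace = 0 := by
    have hle : L ≤ LinearMap.ker (trLM Xbar) := by
      rw [hL, Submodule.span_le]
      rintro _ ⟨i, rfl⟩
      simp only [SetLike.mem_coe, LinearMap.mem_ker, trLM_apply]
      rw [← trace_transpose, transpose_mul, transpose_transpose]
      exact hXA i
    exact fun B hB => hle hB
  obtain ⟨δ, hδ, hco⟩ := coercive hX
  have : SequentialSpace E := inferInstanceAs (SequentialSpace (Fin n → Fin n → ℝ))
  refine IsSeqClosed.isClosed ?_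
  intro u p hu hp
  choose B hB Q hQ hsum using hu
  have htr : ∀ k, (Xbarᵀ * Q k).trace = (Xbarᵀ * u k).trace := by
    intro k
    rw [hsum k, mul_add, trace_add, hLvanish _ (hB k), zero_add]
  have hconv : Filter.Tendsto (fun k => (Xbarᵀ * u k).trace) Filter.atTop
      (nhds ((Xbarᵀ * p).trace)) :=
    ((trLM Xbar).continuous_of_finiteDimensional.tendsto p).comp hp
  obtain ⟨c, hc⟩ := hconv.bddAbove_range
  have hcQ : ∀ k, (Xbarᵀ * Q k).trace ≤ c := by
    intro k
    rw [htr k]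
    exact hc (Set.mem_range_self k)
  have hQbd : ∀ k, ‖Q k‖ ≤ δ⁻¹ * c := by
    intro k
    have h1 : δ * ‖Q k‖ ≤ c := (hco (Q k) (hQ k)).trans (hcQ k)
    rw [inv_mul_eq_div]
    exact (le_div_iff₀' hδ).mpr h1
  set T : Set E := {M | M.PosSemidef} ∩ Metric.closedBall 0 (δ⁻¹ * c) with hT
  have hTcomp : IsCompact T :=
    IsCompact.of_isClosed_subset (isCompact_closedBall (0:E) (δ⁻¹ * c))
      (isClosed_psd.inter Metric.isClosed_closedBall) Set.inter_subset_right
  have hmemT : ∀ k, Q k ∈ T := by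
    intro k
    exact ⟨hQ k, by rw [Metric.mem_closedBall, dist_zero_right]; exact hQbd k⟩
  have : FirstCountableTopology E := inferInstanceAs (FirstCountableTopology (Fin n → Fin n → ℝ))
  obtain ⟨Qlim, hQlimT, φ, hφ, hQconv⟩ := hTcomp.tendsto_subseq hmemT
  have hBtend : Filter.Tendsto (fun k => B (φ k)) Filter.atTop (nhds (p - Qlim)) := by
    have : (fun k => B (φ k)) = fun k => u (φ k) - Q (φ k) := by
      funext k; rw [hsum (φ k)]; abel
    rw [this]
    exact (hp.comp hφ.tendsto_atTop).sub hQconv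
  have hBLlim : p - Qlim ∈ L :=
    L.closed_of_finiteDimensional.mem_of_tendsto hBtend
      (Filter.Eventually.of_forall fun k => hB (φ k))
  exact ⟨p - Qlim, hBLlim, Qlim, hQlimT.1, by abel⟩

end SDPAux

theorem stmt_1 (n m : ℕ) (A0 : Matrix (Fin n) (Fin n) ℝ)
    (A : Fin m → Matrix (Fin n) (Fin n) ℝ)
    (hA0 : A0.IsSymm) (hA : ∀ i, (A i).IsSymm)
    (Xbar : Matrix (Fin n) (Fin n) ℝ) (hXbar : Xbar.PosDef)
    (hXbarA : ∀ i, ((A i)ᵀ * Xbar).trace = 0) :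
    (∃ y : Fin m → ℝ, (A0 - ∑ i, y i • A i).PosSemidef) ∨
    (∃ X : Matrix (Fin n) (Fin n) ℝ, X.PosSemidef ∧
      (∀ i, ((A i)ᵀ * X).trace = 0) ∧ (A0ᵀ * X).trace = -1) := by
  classical
  set L := Submodule.span ℝ (Set.range A) with hL
  set K : Set (Matrix (Fin n) (Fin n) ℝ) :=
    {M | ∃ B ∈ L, ∃ Q : Matrix (Fin n) (Fin n) ℝ, Q.PosSemidef ∧ M = B + Q} with hK
  by_cases hmem : A0 ∈ K
  · obtain ⟨B, hB, Q, hQ, hsum⟩ := hmem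
    obtain ⟨y, hy⟩ := Submodule.mem_span_range_iff_exists_fun ℝ |>.mp hB
    left
    refine ⟨y, ?_⟩
    have : A0 - ∑ i, y i • A i = Q := by rw [hy, hsum]; abel
    rw [this]
    exact hQ
  · right
    have hKconv : Convex ℝ K := by
      rintro x ⟨B1, hB1, Q1, hQ1, rfl⟩ y ⟨B2, hB2, Q2, hQ2, rfl⟩ a b ha hb hab
      exact ⟨a • B1 + b • B2, L.add_mem (L.smul_mem a hB1) (L.smul_mem b hB2),
        a • Q1 + b • Q2, (psd_smul ha hQ1).add (psd_smul hb hQ2), by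
          simp only [smul_add]; abel⟩
    have hKcl : IsClosed K := isClosed_coneK A hXbar hXbarA
    have : LocallyConvexSpace ℝ (Matrix (Fin n) (Fin n) ℝ) :=
      inferInstanceAs (LocallyConvexSpace ℝ (Fin n → Fin n → ℝ))
    obtain ⟨f, u, hfA0, hfK⟩ := geometric_hahn_banach_point_closed hKconv hKcl hmem
    have h0K : (0 : Matrix (Fin n) (Fin n) ℝ) ∈ K :=
      ⟨0, L.zero_mem, 0, Matrix.PosSemidef.zero, by simp⟩
    have hu0 : u < 0 := by simpa using hfK 0 h0K
    have hfA0neg : f A0 < 0 := hfA0.trans hu0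
    have hKs : ∀ S ∈ K, ∀ t : ℝ, 0 < t → t • S ∈ K := by
      rintro S ⟨B, hB, Q, hQ, rfl⟩ t ht
      exact ⟨t • B, L.smul_mem t hB, t • Q, psd_smul ht.le hQ, by rw [smul_add]⟩
    have hfnn : ∀ S ∈ K, 0 ≤ f S := by
      intro S hS
      by_contra h
      push_neg at h
      have ht : 0 < 2 * u / f S := div_pos_of_neg_of_neg (by linarith) h
      have h2 := hfK _ (hKs S hS _ ht)
      rw [_root_.map_smul, smul_eq_mul, div_mul_cancel₀ _ (ne_of_lt h)] at h2
      linarith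
    have hfL : ∀ B ∈ L, f B = 0 := by
      intro B hB
      have h1 : 0 ≤ f B := hfnn B ⟨B, hB, 0, Matrix.PosSemidef.zero, by simp⟩
      have h2 : 0 ≤ f (-B) := hfnn (-B) ⟨-B, L.neg_mem hB, 0, Matrix.PosSemidef.zero, by simp⟩
      rw [map_neg] at h2
      linarith
    -- the representing matrix of f
    set X0 : Matrix (Fin n) (Fin n) ℝ :=
      Matrix.of (fun i j => f (Matrix.single i j 1)) with hX0
    have hrep : ∀ M : Matrix (Fin n) (Fin n) ℝ, f M = (X0ᵀ * M).trace := by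
      intro M
      rw [trace_pair_eq_sum]
      conv_lhs => rw [matrix_eq_sum_single M]
      rw [map_sum]
      refine Finset.sum_congr rfl fun i _ => ?_
      rw [map_sum]
      refine Finset.sum_congr rfl fun j _ => ?_
      have hsb : Matrix.single i j (M i j) = (M i j) • Matrix.single i j (1:ℝ) := by
        rw [smul_single, smul_eq_mul, mul_one]
      rw [hsb, _root_.map_smul, smul_eq_mul, mul_comm]
      rfl
    -- symmetrize
    set Xs : Matrix (Fin n) (Fin n) ℝ := (2:ℝ)⁻¹ • (X0 + X0ᵀ) with hXs
    have hXsT : Xsᵀ = Xs := by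
      rw [hXs, transpose_smul, transpose_add, transpose_transpose, add_comm]
    have hsymtr : ∀ M : Matrix (Fin n) (Fin n) ℝ, Mᵀ = M → (Xsᵀ * M).trace = f M := by
      intro M hM
      have hX0T : (X0 * M).trace = (X0ᵀ * M).trace := by
        conv_lhs => rw [← trace_transpose, transpose_mul, hM]
        rw [trace_mul_comm]
      rw [hXsT, hXs, Matrix.smul_mul, Matrix.add_mul, trace_smul, trace_add, hX0T, smul_eq_mul,
        ← hrep M]
      ring
    have hWsym : ∀ x : Fin n → ℝ, (vecMulVec x x)ᵀ = vecMulVec x x := by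
      intro x
      ext i j
      simp [vecMulVec_apply, mul_comm]
    have hWpsd : ∀ x : Fin n → ℝ, (vecMulVec x x).PosSemidef := by
      intro x
      have h := posSemidef_conjTranspose_mul_self (Matrix.replicateRow Unit x)
      have heq : (Matrix.replicateRow Unit x)ᴴ * Matrix.replicateRow Unit x = vecMulVec x x := by
        rw [vecMulVec_eq Unit, conjTranspose_replicateRow]
        congr 1
      rwa [heq] at h
    have hquad : ∀ x : Fin n → ℝ, x ⬝ᵥ (Xs *ᵥ x) = f (vecMulVec x x) := by
      intro x
      rw [← hsymtr _ (hWsym x), trace_pair_eq_sum]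
      simp only [vecMulVec_apply, dotProduct, mulVec]
      refine Finset.sum_congr rfl fun i _ => ?_
      rw [Finset.mul_sum]
      exact Finset.sum_congr rfl fun j _ => by ring
    have hXspsd : Xs.PosSemidef := by
      refine posSemidef_iff_dotProduct_mulVec.mpr ⟨?_, fun x => ?_⟩
      · show Xsᴴ = Xs
        rw [conjTranspose_eq_transpose_of_trivial, hXsT]
      · rw [star_trivial, hquad x]
        exact hfnn _ ⟨0, L.zero_mem, _, hWpsd x, by simp⟩
    have hAi : ∀ i, ((A i)ᵀ * Xs).trace = 0 := by
      intro i
      rw [← trace_transpose, transpose_mul, transpose_transpose, hsymtr _ (hA i)]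
      exact hfL _ (Submodule.subset_span ⟨i, rfl⟩)
    have hA0tr : (A0ᵀ * Xs).trace = f A0 := by
      rw [← trace_transpose, transpose_mul, transpose_transpose, hsymtr _ hA0]
    have hcpos : (0:ℝ) < (-(f A0))⁻¹ := inv_pos.mpr (by linarith)
    refine ⟨(-(f A0))⁻¹ • Xs, psd_smul hcpos.le hXspsd, fun i => ?_, ?_⟩
    · rw [Matrix.mul_smul, trace_smul, hAi i, smul_zero]
    · rw [Matrix.mul_smul, trace_smul, hA0tr, smul_eq_mul, inv_neg, neg_mul,
        inv_mul_cancel₀ (ne_of_lt hfA0neg)]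
end

section
/- Let Σ: A(y) ⪰ 0 be a weakly infeasible linear matrix inequality in block-diagonal form with blocks B_1,...,B_k. For each index set I ⊆ [k] of an irreducible infeasible block subsystem (IIS), there exists an extreme point of the alternative spectrahedron S(Σ) whose block support is exactly I. -/
open Matrix
open scoped BigOperators

attribute [local instance] Matrix.normedAddCommGroup Matrix.normedSpace


def IsBlockDiag {n k : ℕ} (b : Fin n → Fin k) (X : Matrix (Fin n) (Fin n) ℝ) : Prop :=
  ∀ s t, b s ≠ b t → X s t = 0

def blockSupport {n k : ℕ} (b : Fin n → Fin k) (X : Matrix (Fin n) (Fin n) ℝ) : Set (Fin k) :=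
  {i | ∃ s t, b s = i ∧ b t = i ∧ X s t ≠ 0}

/-- The block subsystem of the pencil `A0 - ∑ y i • A i` indexed by the row/column set `S`
is weakly feasible: for every `ε > 0` there is `y` such that the principal submatrix of
`A(y) + ε·Id` indexed by `S` is positive semidefinite (expressed via quadratic forms on
vectors supported on `S`). -/
def WeaklyFeasibleOn {n m : ℕ} (A0 : Matrix (Fin n) (Fin n) ℝ)
    (A : Fin m → Matrix (Fin n) (Fin n) ℝ) (S : Set (Fin n)) : Prop :=
  ∀ ε : ℝ, 0 < ε → ∃ y : Fin m → ℝ, ∀ x : Fin n → ℝ, (∀ j, j ∉ S → x j = 0) →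
    0 ≤ x ⬝ᵥ (A0 - ∑ i, y i • A i).mulVec x + ε * (x ⬝ᵥ x)

namespace Stmt7Aux

open scoped Classical

variable {n k : ℕ}

/-- entrywise inner product of square matrices -/
def ip {n : ℕ} (M X : Matrix (Fin n) (Fin n) ℝ) : ℝ := ∑ s, ∑ t, M s t * X s t

lemma trace_eq_ip {n : ℕ} (M X : Matrix (Fin n) (Fin n) ℝ) : (Mᵀ * X).trace = ip M X := by
  rw [ip, Finset.sum_comm]
  simp [Matrix.trace, Matrix.diag, Matrix.mul_apply, Matrix.transpose_apply]

lemma dotProduct_mulVec_eq {n : ℕ} (x y : Fin n → ℝ) (M : Matrix (Fin n) (Fin n) ℝ) :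
    x ⬝ᵥ M *ᵥ y = ∑ s, ∑ t, x s * M s t * y t := by
  simp [dotProduct, mulVec, Finset.mul_sum, mul_assoc]

lemma psd_quad {X : Matrix (Fin n) (Fin n) ℝ} (hX : X.PosSemidef) (x : Fin n → ℝ) :
    0 ≤ x ⬝ᵥ X *ᵥ x := by
  simpa using hX.dotProduct_mulVec_nonneg x

lemma psd_smul {X : Matrix (Fin n) (Fin n) ℝ} (hX : X.PosSemidef) {a : ℝ} (ha : 0 ≤ a) :
    (a • X).PosSemidef := by
  refine Matrix.PosSemidef.of_dotProduct_mulVec_nonneg ?_ ?_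
  · rw [Matrix.IsHermitian, Matrix.conjTranspose_smul, hX.1.eq]
    norm_num
  · intro x
    rw [Matrix.smul_mulVec, dotProduct_smul, smul_eq_mul]
    exact mul_nonneg ha (hX.dotProduct_mulVec_nonneg x)

lemma psd_diag {X : Matrix (Fin n) (Fin n) ℝ} (hX : X.PosSemidef) (s : Fin n) :
    0 ≤ X s s := by
  have := psd_quad hX (Pi.single s 1)
  rwa [dotProduct_mulVec_eq, Finset.sum_eq_single s, Finset.sum_eq_single s,
    Pi.single_eq_same, one_mul, mul_one] at this
  · intro t _ ht; simp [Pi.single_eq_of_ne ht]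
  · intro h; exact absurd (Finset.mem_univ _) h
  · intro t _ ht; rw [Finset.sum_eq_zero]; intro u _; simp [Pi.single_eq_of_ne ht]
  · intro h; exact absurd (Finset.mem_univ _) h




noncomputable def maskD (b : Fin n → Fin k) (I : Set (Fin k)) (i : Fin k) :
    Matrix (Fin n) (Fin n) ℝ :=
  Matrix.diagonal (fun s => if b s = i ∧ i ∈ I then (1:ℝ) else 0)

noncomputable def proj (b : Fin n → Fin k) (I : Set (Fin k)) (C : Matrix (Fin n) (Fin n) ℝ) :
    Matrix (Fin n) (Fin n) ℝ :=
  ∑ i, maskD b I i * C * maskD b I i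

lemma mask_entry (b : Fin n → Fin k) (I : Set (Fin k)) (i : Fin k)
    (C : Matrix (Fin n) (Fin n) ℝ) (s t : Fin n) :
    (maskD b I i * C * maskD b I i) s t
      = (if b s = i ∧ i ∈ I then (1:ℝ) else 0) * C s t * (if b t = i ∧ i ∈ I then (1:ℝ) else 0) := by
  simp [maskD, Matrix.mul_diagonal, Matrix.diagonal_mul]

lemma proj_apply (b : Fin n → Fin k) (I : Set (Fin k)) (C : Matrix (Fin n) (Fin n) ℝ)
    (s t : Fin n) :
    proj b I C s t = if b s = b t ∧ b s ∈ I then C s t else 0 := by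
  rw [proj, Matrix.sum_apply]
  rw [Finset.sum_congr rfl fun i _ => mask_entry b I i C s t]
  rw [Finset.sum_eq_single (b s)]
  · by_cases hI : b s ∈ I
    · by_cases hbt : b t = b s
      · simp [hbt, hI]
      · have hst : ¬ (b s = b t) := fun h => hbt h.symm
        simp [hbt, hst]
    · simp [hI]
  · intro i _ hi
    have : ¬ (b s = i ∧ i ∈ I) := fun h => hi h.1.symm
    simp [this]
  · intro h; exact absurd (Finset.mem_univ _) h

lemma proj_posSemidef (b : Fin n → Fin k) (I : Set (Fin k)) {C : Matrix (Fin n) (Fin n) ℝ}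
    (hC : C.PosSemidef) : (proj b I C).PosSemidef := by
  rw [proj]
  refine Finset.sum_induction _ _ (fun a c ha hc => ha.add hc) Matrix.PosSemidef.zero ?_
  intro i _
  have hD : (maskD b I i)ᴴ = maskD b I i := by
    rw [maskD, Matrix.diagonal_conjTranspose]
    simp [Pi.star_def]
  have h := hC.mul_mul_conjTranspose_same (maskD b I i)
  rwa [hD] at h

lemma proj_quadform (b : Fin n → Fin k) (I : Set (Fin k)) (M : Matrix (Fin n) (Fin n) ℝ)
    (x : Fin n → ℝ) :
    x ⬝ᵥ (proj b I M) *ᵥ x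
      = ∑ i, (fun s => if b s = i ∧ i ∈ I then x s else 0) ⬝ᵥ
          M *ᵥ (fun s => if b s = i ∧ i ∈ I then x s else 0) := by
  rw [dotProduct_mulVec_eq]
  have h1 : ∀ s t, x s * (proj b I M) s t * x t
      = ∑ i, ((if b s = i ∧ i ∈ I then x s else 0) * M s t * (if b t = i ∧ i ∈ I then x t else 0)) := by
    intro s t
    rw [proj, Matrix.sum_apply, Finset.mul_sum, Finset.sum_mul]
    exact Finset.sum_congr rfl fun i _ => by rw [mask_entry]; split_ifs <;> ring
  calc ∑ s, ∑ t, x s * (proj b I M) s t * x t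
      = ∑ s, ∑ t, ∑ i, ((if b s = i ∧ i ∈ I then x s else 0) * M s t
          * (if b t = i ∧ i ∈ I then x t else 0)) :=
        Finset.sum_congr rfl fun s _ => Finset.sum_congr rfl fun t _ => h1 s t
    _ = ∑ s, ∑ i, ∑ t, ((if b s = i ∧ i ∈ I then x s else 0) * M s t
          * (if b t = i ∧ i ∈ I then x t else 0)) :=
        Finset.sum_congr rfl fun s _ => Finset.sum_comm
    _ = ∑ i, ∑ s, ∑ t, ((if b s = i ∧ i ∈ I then x s else 0) * M s t
          * (if b t = i ∧ i ∈ I then x t else 0)) := Finset.sum_comm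
    _ = ∑ i, (fun s => if b s = i ∧ i ∈ I then x s else 0) ⬝ᵥ
          M *ᵥ (fun s => if b s = i ∧ i ∈ I then x s else 0) :=
        Finset.sum_congr rfl fun i _ => (dotProduct_mulVec_eq _ _ _).symm

noncomputable def projL (b : Fin n → Fin k) (I : Set (Fin k)) :
    Matrix (Fin n) (Fin n) ℝ →ₗ[ℝ] Matrix (Fin n) (Fin n) ℝ where
  toFun := proj b I
  map_add' X Y := by
    ext s t
    simp only [proj_apply, Matrix.add_apply]
    split_ifs <;> simp
  map_smul' c X := by
    ext s t
    simp only [proj_apply, Matrix.smul_apply, smul_eq_mul, RingHom.id_apply]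
    split_ifs <;> simp

lemma single_quad (X : Matrix (Fin n) (Fin n) ℝ) (s t : Fin n) (a c : ℝ) :
    (Pi.single s a) ⬝ᵥ X *ᵥ (Pi.single t c) = a * X s t * c := by
  rw [dotProduct_mulVec_eq]
  rw [Finset.sum_eq_single s]
  · rw [Finset.sum_eq_single t]
    · rw [Pi.single_eq_same, Pi.single_eq_same]
    · intro u _ hu; simp [Pi.single_eq_of_ne hu]
    · intro h; exact absurd (Finset.mem_univ _) h
  · intro u _ hu; rw [Finset.sum_eq_zero]; intro v _; simp [Pi.single_eq_of_ne hu]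
  · intro h; exact absurd (Finset.mem_univ _) h

lemma quad_pair (X : Matrix (Fin n) (Fin n) ℝ) (s t : Fin n) (a c : ℝ) :
    (Pi.single s a + Pi.single t c) ⬝ᵥ X *ᵥ (Pi.single s a + Pi.single t c)
      = a * X s s * a + a * X s t * c + c * X t s * a + c * X t t * c := by
  rw [Matrix.mulVec_add, dotProduct_add, add_dotProduct, add_dotProduct,
    single_quad, single_quad, single_quad, single_quad]
  ring

lemma psd_apply_symm {X : Matrix (Fin n) (Fin n) ℝ} (hX : X.PosSemidef) (s t : Fin n) :
    X t s = X s t := by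
  have := hX.1.apply s t
  simpa using this

lemma diag_le_trace {X : Matrix (Fin n) (Fin n) ℝ} (hX : X.PosSemidef) (s : Fin n) :
    X s s ≤ X.trace := by
  have htr : X.trace = ∑ u, X u u := by simp [Matrix.trace, Matrix.diag]
  rw [htr]
  exact Finset.single_le_sum (fun u _ => psd_diag hX u) (Finset.mem_univ s)

lemma trace_nonneg {X : Matrix (Fin n) (Fin n) ℝ} (hX : X.PosSemidef) : 0 ≤ X.trace := by
  have htr : X.trace = ∑ u, X u u := by simp [Matrix.trace, Matrix.diag]
  rw [htr]
  exact Finset.sum_nonneg fun u _ => psd_diag hX u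

lemma psd_entry_le_trace {X : Matrix (Fin n) (Fin n) ℝ} (hX : X.PosSemidef) (s t : Fin n) :
    |X s t| ≤ X.trace := by
  have hs := diag_le_trace hX s
  have ht := diag_le_trace hX t
  have hss := psd_diag hX s
  have htt := psd_diag hX t
  by_cases hst : s = t
  · subst hst; rw [abs_of_nonneg hss]; exact hs
  · have h1 := psd_quad hX (Pi.single s 1 + Pi.single t 1)
    have h2 := psd_quad hX (Pi.single s 1 + Pi.single t (-1))
    rw [quad_pair] at h1 h2
    have hsym := psd_apply_symm hX s t
    rw [abs_le]
    constructor <;> nlinarith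

lemma psd_row_zero {X : Matrix (Fin n) (Fin n) ℝ} (hX : X.PosSemidef) {s : Fin n}
    (hs : X s s = 0) (t : Fin n) : X s t = 0 := by
  by_cases hst : s = t
  · subst hst; exact hs
  by_contra hne
  have hsym := psd_apply_symm hX s t
  have htt := psd_diag hX t
  have hq1 : (0:ℝ) < X t t + 1 := by linarith
  set p := X s t with hp
  set q := X t t with hq
  set c : ℝ := -p / (q + 1) with hc
  have h := psd_quad hX (Pi.single s 1 + Pi.single t c)
  rw [quad_pair] at h
  rw [hs, hsym] at h
  -- h : 0 ≤ 1 * 0 * 1 + 1 * p * c + c * p * 1 + c * q * c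
  have key : 0 ≤ (1 * 0 * 1 + 1 * p * c + c * p * 1 + c * q * c) * ((q+1)*(q+1)) :=
    mul_nonneg h (by positivity)
  rw [hc] at key
  have hq1' : (q + 1) ≠ 0 := ne_of_gt hq1
  field_simp at key
  nlinarith [mul_self_pos.mpr hne, htt]

lemma quad_transpose (M : Matrix (Fin n) (Fin n) ℝ) (x : Fin n → ℝ) :
    x ⬝ᵥ Mᵀ *ᵥ x = x ⬝ᵥ M *ᵥ x := by
  rw [dotProduct_mulVec_eq, dotProduct_mulVec_eq, Finset.sum_comm]
  exact Finset.sum_congr rfl fun s _ => Finset.sum_congr rfl fun t _ => by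
    rw [Matrix.transpose_apply]; ring

lemma ip_add_left (M N X : Matrix (Fin n) (Fin n) ℝ) : ip (M + N) X = ip M X + ip N X := by
  simp [ip, Matrix.add_apply, add_mul, Finset.sum_add_distrib]

lemma ip_sub_left (M N X : Matrix (Fin n) (Fin n) ℝ) : ip (M - N) X = ip M X - ip N X := by
  simp [ip, Matrix.sub_apply, sub_mul, Finset.sum_sub_distrib]

lemma ip_smul_left (c : ℝ) (M X : Matrix (Fin n) (Fin n) ℝ) : ip (c • M) X = c * ip M X := by
  rw [ip, ip, Finset.mul_sum]
  refine Finset.sum_congr rfl fun s _ => ?_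
  rw [Finset.mul_sum]
  exact Finset.sum_congr rfl fun t _ => by simp [Matrix.smul_apply]; ring

lemma ip_smul_right (c : ℝ) (M X : Matrix (Fin n) (Fin n) ℝ) : ip M (c • X) = c * ip M X := by
  rw [ip, ip, Finset.mul_sum]
  refine Finset.sum_congr rfl fun s _ => ?_
  rw [Finset.mul_sum]
  exact Finset.sum_congr rfl fun t _ => by simp [Matrix.smul_apply]; ring

lemma ip_sum_left {m : ℕ} (f : Fin m → Matrix (Fin n) (Fin n) ℝ) (X : Matrix (Fin n) (Fin n) ℝ) :
    ip (∑ i, f i) X = ∑ i, ip (f i) X := by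
  rw [ip]
  calc ∑ s, ∑ t, (∑ i, f i) s t * X s t
      = ∑ s, ∑ t, ∑ i, f i s t * X s t := by
        refine Finset.sum_congr rfl fun s _ => Finset.sum_congr rfl fun t _ => ?_
        rw [Matrix.sum_apply, Finset.sum_mul]
    _ = ∑ s, ∑ i, ∑ t, f i s t * X s t := Finset.sum_congr rfl fun s _ => Finset.sum_comm
    _ = ∑ i, ∑ s, ∑ t, f i s t * X s t := Finset.sum_comm

lemma ip_one (X : Matrix (Fin n) (Fin n) ℝ) : ip 1 X = X.trace := by
  have htr : X.trace = ∑ u, X u u := by simp [Matrix.trace, Matrix.diag]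
  rw [ip, htr]
  refine Finset.sum_congr rfl fun s _ => ?_
  rw [Finset.sum_eq_single s]
  · simp [Matrix.one_apply]
  · intro t _ ht; simp [Matrix.one_apply, Ne.symm ht]
  · intro h; exact absurd (Finset.mem_univ _) h

lemma psd_ip_nonneg {P Q : Matrix (Fin n) (Fin n) ℝ} (hP : P.PosSemidef) (hQ : Q.PosSemidef) :
    0 ≤ ip P Q := by
  obtain ⟨B, rfl⟩ : ∃ B : Matrix (Fin n) (Fin n) ℝ, Q = Bᴴ * B := by
    open scoped MatrixOrder in
    exact ⟨CFC.sqrt Q, by rw [(CFC.sqrt_nonneg Q).posSemidef.1.eq, CFC.sqrt_mul_sqrt_self Q hQ.nonneg]⟩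
  have key : ip P (Bᴴ * B) = ∑ r, (fun s => B r s) ⬝ᵥ P *ᵥ (fun s => B r s) := by
    rw [ip]
    calc ∑ s, ∑ t, P s t * (Bᴴ * B) s t
        = ∑ s, ∑ t, ∑ r, B r s * P s t * B r t := by
          refine Finset.sum_congr rfl fun s _ => Finset.sum_congr rfl fun t _ => ?_
          rw [Matrix.mul_apply, Finset.mul_sum]
          exact Finset.sum_congr rfl fun r _ => by
            rw [Matrix.conjTranspose_apply]; simp; ring
      _ = ∑ s, ∑ r, ∑ t, B r s * P s t * B r t := Finset.sum_congr rfl fun s _ => Finset.sum_comm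
      _ = ∑ r, ∑ s, ∑ t, B r s * P s t * B r t := Finset.sum_comm
      _ = ∑ r, (fun s => B r s) ⬝ᵥ P *ᵥ (fun s => B r s) :=
          Finset.sum_congr rfl fun r _ => (dotProduct_mulVec_eq _ _ _).symm
  rw [key]
  exact Finset.sum_nonneg fun r _ => psd_quad hP _

lemma clm_repr (f : Matrix (Fin n) (Fin n) ℝ →L[ℝ] ℝ) (X : Matrix (Fin n) (Fin n) ℝ) :
    f X = ∑ s, ∑ t, X s t * f (Matrix.single s t 1) := by
  conv_lhs => rw [Matrix.matrix_eq_sum_single X]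
  rw [map_sum]
  refine Finset.sum_congr rfl fun s _ => ?_
  rw [map_sum]
  refine Finset.sum_congr rfl fun t _ => ?_
  have h : Matrix.single s t (X s t) = (X s t) • Matrix.single s t (1:ℝ) := by
    rw [Matrix.smul_single, smul_eq_mul, mul_one]
  rw [h, _root_.map_smul, smul_eq_mul]

lemma vecMulVec_posSemidef (x : Fin n → ℝ) : (Matrix.vecMulVec x x).PosSemidef := by
  refine Matrix.PosSemidef.of_dotProduct_mulVec_nonneg ?_ ?_
  · ext s t
    simp [Matrix.conjTranspose_apply, Matrix.vecMulVec_apply, mul_comm]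
  · intro z
    have h : star z ⬝ᵥ (Matrix.vecMulVec x x) *ᵥ z = (∑ s, z s * x s) * (∑ t, x t * z t) := by
      rw [star_trivial, dotProduct_mulVec_eq, Finset.sum_mul_sum]
      exact Finset.sum_congr rfl fun s _ => Finset.sum_congr rfl fun t _ => by
        rw [Matrix.vecMulVec_apply]; ring
    rw [h]
    have h2 : (∑ t, x t * z t) = (∑ s, z s * x s) :=
      Finset.sum_congr rfl fun t _ => mul_comm _ _
    rw [h2]
    exact mul_self_nonneg _

lemma blockDiag_sub {n k : ℕ} {b : Fin n → Fin k} {M N : Matrix (Fin n) (Fin n) ℝ}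
    (hM : IsBlockDiag b M) (hN : IsBlockDiag b N) : IsBlockDiag b (M - N) := by
  intro s t h
  simp [Matrix.sub_apply, hM s t h, hN s t h]

lemma blockDiag_sum {n k m : ℕ} {b : Fin n → Fin k} {f : Fin m → Matrix (Fin n) (Fin n) ℝ}
    (hf : ∀ i, IsBlockDiag b (f i)) : IsBlockDiag b (∑ i, f i) := by
  intro s t h
  rw [Matrix.sum_apply]
  exact Finset.sum_eq_zero fun i _ => hf i s t h

lemma blockDiag_smul {n k : ℕ} {b : Fin n → Fin k} {M : Matrix (Fin n) (Fin n) ℝ} (c : ℝ)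
    (hM : IsBlockDiag b M) : IsBlockDiag b (c • M) := by
  intro s t h
  simp [Matrix.smul_apply, hM s t h]

/-- For a block-diagonal `M` and a vector supported on the blocks in `I`, the quadratic
form of `proj b I M` agrees with that of `M`. -/
lemma proj_quad_supported {n k : ℕ} {b : Fin n → Fin k} {I : Set (Fin k)}
    {M : Matrix (Fin n) (Fin n) ℝ} (hM : IsBlockDiag b M) {x : Fin n → ℝ}
    (hx : ∀ j, b j ∉ I → x j = 0) :
    x ⬝ᵥ (proj b I M) *ᵥ x = x ⬝ᵥ M *ᵥ x := by
  rw [dotProduct_mulVec_eq, dotProduct_mulVec_eq]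
  refine Finset.sum_congr rfl fun s _ => Finset.sum_congr rfl fun t _ => ?_
  rw [proj_apply]
  by_cases hc : b s = b t ∧ b s ∈ I
  · rw [if_pos hc]
  · rw [if_neg hc]
    push_neg at hc
    by_cases hbs : b s = b t
    · have hsI := hc hbs
      rw [hx s hsI]
      ring
    · rw [hM s t hbs]

/-- Quadratic form of the `I`-restricted identity on supported vectors. -/
lemma diagI_quad_supported {n k : ℕ} {b : Fin n → Fin k} {I : Set (Fin k)} {x : Fin n → ℝ}
    (hx : ∀ j, b j ∉ I → x j = 0) :
    x ⬝ᵥ (Matrix.diagonal (fun s => if b s ∈ I then (1:ℝ) else 0)) *ᵥ x = x ⬝ᵥ x := by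
  rw [dotProduct_mulVec_eq, dotProduct]
  refine Finset.sum_congr rfl fun s _ => ?_
  rw [Finset.sum_eq_single s]
  · rw [Matrix.diagonal_apply_eq]
    by_cases h : b s ∈ I
    · rw [if_pos h]; ring
    · rw [hx s h]; ring
  · intro t _ ht; rw [Matrix.diagonal_apply_ne' _ ht]; ring
  · intro h; exact absurd (Finset.mem_univ _) h

lemma proj_add' (b : Fin n → Fin k) (I : Set (Fin k)) (M N : Matrix (Fin n) (Fin n) ℝ) :
    proj b I (M + N) = proj b I M + proj b I N := (projL b I).map_add M N

lemma proj_smul' (b : Fin n → Fin k) (I : Set (Fin k)) (c : ℝ) (M : Matrix (Fin n) (Fin n) ℝ) :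
    proj b I (c • M) = c • proj b I M := (projL b I).map_smul c M

lemma proj_pencil (b : Fin n → Fin k) (I : Set (Fin k)) {m : ℕ}
    (A0 : Matrix (Fin n) (Fin n) ℝ) (A : Fin m → Matrix (Fin n) (Fin n) ℝ) (y : Fin m → ℝ) :
    proj b I (A0 - ∑ i, y i • A i) = proj b I A0 - ∑ i, y i • proj b I (A i) := by
  show (projL b I) (A0 - ∑ i, y i • A i) = (projL b I) A0 - ∑ i, y i • (projL b I) (A i)
  rw [map_sub, map_sum]
  congr 1
  exact Finset.sum_congr rfl fun i _ => (projL b I).map_smul (y i) (A i)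

lemma exists_sol {n m k : ℕ} (b : Fin n → Fin k)
    (A0 : Matrix (Fin n) (Fin n) ℝ) (A : Fin m → Matrix (Fin n) (Fin n) ℝ)
    (hA0 : A0.IsSymm) (hA : ∀ i, (A i).IsSymm)
    (hA0b : IsBlockDiag b A0) (hAb : ∀ i, IsBlockDiag b (A i))
    (I : Set (Fin k))
    (hIinf : ¬ WeaklyFeasibleOn A0 A {j | b j ∈ I}) :
    ∃ X : Matrix (Fin n) (Fin n) ℝ, X.PosSemidef ∧
      (∀ s t, ¬ (b s = b t ∧ b s ∈ I) → X s t = 0) ∧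
      (∀ i, ip (A i) X = 0) ∧ ip A0 X = -1 := by
  classical
  rw [WeaklyFeasibleOn] at hIinf
  push_neg at hIinf
  obtain ⟨ε, hε, hbad⟩ := hIinf
  set E0 : Matrix (Fin n) (Fin n) ℝ :=
    Matrix.diagonal (fun s => if b s ∈ I then (1:ℝ) else 0) with hE0
  have hE0psd : E0.PosSemidef := by
    refine Matrix.PosSemidef.diagonal ?_
    intro s
    dsimp
    split <;> norm_num
  set T : Set (Matrix (Fin n) (Fin n) ℝ) :=
    {W | ∃ P : Matrix (Fin n) (Fin n) ℝ, P.PosSemidef ∧ ∃ y : Fin m → ℝ,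
        W = P - (proj b I (A0 - ∑ i, y i • A i) + (ε/2) • E0)} with hT
  -- T is convex
  have hTconv : Convex ℝ T := by
    rintro W1 ⟨P1, hP1, y1, rfl⟩ W2 ⟨P2, hP2, y2, rfl⟩ a c ha hc hac
    refine ⟨a • P1 + c • P2, (psd_smul hP1 ha).add (psd_smul hP2 hc),
      fun i => a * y1 i + c * y2 i, ?_⟩
    have hcomb : a • (A0 - ∑ i, y1 i • A i) + c • (A0 - ∑ i, y2 i • A i)
        = A0 - ∑ i, (a * y1 i + c * y2 i) • A i := by
      ext s t
      simp only [Matrix.add_apply, Matrix.sub_apply, Matrix.smul_apply, Matrix.sum_apply,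
        smul_eq_mul]
      have hsum : ∑ i, (a * y1 i + c * y2 i) * A i s t
          = a * ∑ i, y1 i * A i s t + c * ∑ i, y2 i * A i s t := by
        rw [Finset.mul_sum, Finset.mul_sum, ← Finset.sum_add_distrib]
        exact Finset.sum_congr rfl fun i _ => by ring
      rw [hsum]
      linear_combination A0 s t * hac
    rw [← hcomb, proj_add', proj_smul', proj_smul']
    ext s t
    simp only [Matrix.add_apply, Matrix.sub_apply, Matrix.smul_apply, smul_eq_mul]
    linear_combination (-(ε / 2 * E0 s t)) * hac
  -- every element of T is far from 0
  have hbound : ∀ W ∈ T, ε / (2 * ((n:ℝ) + 1)) ≤ ‖W‖ := by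
    rintro W ⟨P, hP, y, rfl⟩
    obtain ⟨x, hxsupp, hxneg⟩ := hbad y
    have hxsupp' : ∀ j, b j ∉ I → x j = 0 := fun j hj => hxsupp j (by simpa using hj)
    have hDb : IsBlockDiag b (A0 - ∑ i, y i • A i) :=
      blockDiag_sub hA0b (blockDiag_sum fun i => blockDiag_smul _ (hAb i))
    set W := P - (proj b I (A0 - ∑ i, y i • A i) + (ε/2) • E0) with hW
    have hZx : x ⬝ᵥ (proj b I (A0 - ∑ i, y i • A i) + (ε/2) • E0) *ᵥ x
        = x ⬝ᵥ (A0 - ∑ i, y i • A i) *ᵥ x + (ε/2) * (x ⬝ᵥ x) := by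
      rw [Matrix.add_mulVec, dotProduct_add, proj_quad_supported hDb hxsupp',
        Matrix.smul_mulVec, dotProduct_smul, smul_eq_mul, hE0,
        diagI_quad_supported hxsupp']
    have hq : (ε/2) * (x ⬝ᵥ x) < x ⬝ᵥ W *ᵥ x := by
      have h1 : x ⬝ᵥ W *ᵥ x = x ⬝ᵥ P *ᵥ x
          - (x ⬝ᵥ (A0 - ∑ i, y i • A i) *ᵥ x + (ε/2) * (x ⬝ᵥ x)) := by
        rw [hW, Matrix.sub_mulVec, dotProduct_sub, hZx]
      have h2 : 0 ≤ x ⬝ᵥ P *ᵥ x := psd_quad hP x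
      linarith
    have hxxnn : 0 ≤ x ⬝ᵥ x := by
      rw [dotProduct]; exact Finset.sum_nonneg fun j _ => mul_self_nonneg _
    have hxx : 0 < x ⬝ᵥ x := by
      rcases hxxnn.lt_or_eq with h | h
      · exact h
      · exfalso
        have hx0 : x = 0 := by
          funext j
          have := (Finset.sum_eq_zero_iff_of_nonneg
            (fun j _ => mul_self_nonneg (x j))).mp (by rw [dotProduct] at h; exact h.symm)
          exact mul_self_eq_zero.mp (this j (Finset.mem_univ j))
        rw [hx0] at hxneg
        simp at hxneg
    have habs : ∀ s t, x s * W s t * x t ≤ |x s| * ‖W‖ * |x t| := by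
      intro s t
      have h1 : x s * W s t * x t ≤ |x s * W s t * x t| := le_abs_self _
      have h2 : |x s * W s t * x t| = |x s| * |W s t| * |x t| := by rw [abs_mul, abs_mul]
      have h3 : |W s t| ≤ ‖W‖ := by
        rw [← Real.norm_eq_abs]; exact Matrix.norm_entry_le_entrywise_sup_norm W
      calc x s * W s t * x t ≤ |x s| * |W s t| * |x t| := h1.trans (le_of_eq h2)
        _ ≤ |x s| * ‖W‖ * |x t| :=
          mul_le_mul_of_nonneg_right
            (mul_le_mul_of_nonneg_left h3 (abs_nonneg _)) (abs_nonneg _)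
    have hsum : x ⬝ᵥ W *ᵥ x ≤ ((∑ s, |x s|) * ‖W‖) * (∑ t, |x t|) := by
      rw [dotProduct_mulVec_eq]
      calc ∑ s, ∑ t, x s * W s t * x t
          ≤ ∑ s, ∑ t, |x s| * ‖W‖ * |x t| :=
            Finset.sum_le_sum fun s _ => Finset.sum_le_sum fun t _ => habs s t
        _ = ((∑ s, |x s| * ‖W‖) * (∑ t, |x t|)) :=
            (Finset.sum_mul_sum Finset.univ Finset.univ (fun s => |x s| * ‖W‖)
              (fun t => |x t|)).symm
        _ = ((∑ s, |x s|) * ‖W‖) * (∑ t, |x t|) := by rw [← Finset.sum_mul]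
    have hCS : (∑ s, |x s|) * (∑ t, |x t|) ≤ (n:ℝ) * (x ⬝ᵥ x) := by
      have h := sq_sum_le_card_mul_sum_sq (s := Finset.univ) (f := fun j : Fin n => |x j|)
      have hxx2 : x ⬝ᵥ x = ∑ j, x j ^ 2 := by
        rw [dotProduct]; exact Finset.sum_congr rfl fun j _ => (sq (x j)).symm
      rw [hxx2]
      calc (∑ s, |x s|) * (∑ t, |x t|) = (∑ s, |x s|) ^ 2 := (sq _).symm
        _ ≤ (Finset.univ.card : ℝ) * ∑ j, |x j| ^ 2 := h
        _ = (n:ℝ) * ∑ j, x j ^ 2 := by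
            simp [Finset.card_univ, sq_abs]
    have hWnn : 0 ≤ ‖W‖ := norm_nonneg W
    have hfin : (ε/2) * (x ⬝ᵥ x) < (‖W‖ * (n:ℝ)) * (x ⬝ᵥ x) := by
      calc (ε/2) * (x ⬝ᵥ x) < x ⬝ᵥ W *ᵥ x := hq
        _ ≤ ((∑ s, |x s|) * ‖W‖) * (∑ t, |x t|) := hsum
        _ = ‖W‖ * ((∑ s, |x s|) * (∑ t, |x t|)) := by ring
        _ ≤ ‖W‖ * ((n:ℝ) * (x ⬝ᵥ x)) := by
            exact mul_le_mul_of_nonneg_left hCS hWnn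
        _ = (‖W‖ * (n:ℝ)) * (x ⬝ᵥ x) := by ring
    have hlt : ε/2 < ‖W‖ * (n:ℝ) := lt_of_mul_lt_mul_right hfin hxxnn
    rw [div_le_iff₀ (by positivity)]
    nlinarith
  -- 0 is not in the closure of T
  have h0 : (0 : Matrix (Fin n) (Fin n) ℝ) ∉ closure T := by
    intro h0mem
    have hsub : T ⊆ {W : Matrix (Fin n) (Fin n) ℝ | ε / (2 * ((n:ℝ) + 1)) ≤ ‖W‖} := hbound
    have hcl : closure T ⊆ {W : Matrix (Fin n) (Fin n) ℝ | ε / (2 * ((n:ℝ) + 1)) ≤ ‖W‖} :=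
      closure_minimal hsub (isClosed_le continuous_const continuous_norm)
    have h1 := hcl h0mem
    have h2 : (0:ℝ) < ε / (2 * ((n:ℝ) + 1)) := by positivity
    simp only [Set.mem_setOf_eq, norm_zero] at h1
    linarith
  -- separation
  haveI : LocallyConvexSpace ℝ (Matrix (Fin n) (Fin n) ℝ) := NormedSpace.toLocallyConvexSpace
  obtain ⟨f, u, hfu, hsep⟩ :=
    geometric_hahn_banach_point_closed hTconv.closure isClosed_closure h0
  have hu : 0 < u := by simpa using hfu
  have hsep' : ∀ W ∈ T, u < f W := fun W hW => hsep W (subset_closure hW)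
  -- f is nonnegative on the PSD cone
  set z0 : Matrix (Fin n) (Fin n) ℝ :=
    proj b I (A0 - ∑ i, (fun _ : Fin m => (0:ℝ)) i • A i) + (ε/2) • E0 with hz0
  have hfP : ∀ P : Matrix (Fin n) (Fin n) ℝ, P.PosSemidef → 0 ≤ f P := by
    intro P hP
    by_contra hneg
    push_neg at hneg
    have hz : ∀ t : ℝ, 0 ≤ t → u < t * f P - f z0 := by
      intro t ht
      have hmem : t • P - z0 ∈ T := ⟨t • P, psd_smul hP ht, fun _ => 0, rfl⟩
      have := hsep' _ hmem
      rwa [map_sub, _root_.map_smul, smul_eq_mul] at this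
    set t0 := max 0 ((u + f z0) / f P) with ht0
    have h1 := hz t0 (le_max_left _ _)
    have h2 : t0 * f P ≤ u + f z0 := by
      have h3 : (u + f z0) / f P ≤ t0 := le_max_right _ _
      have h4 := mul_le_mul_of_nonpos_right h3 (le_of_lt hneg)
      rwa [div_mul_cancel₀ _ (ne_of_lt hneg)] at h4
    linarith
  -- f kills each A i (projected), and is negative on projected A0
  have hexp : ∀ y : Fin m → ℝ, f (proj b I (A0 - ∑ i, y i • A i) + (ε/2) • E0)
      = f (proj b I A0) + (ε/2) * f E0 - ∑ i, y i * f (proj b I (A i)) := by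
    intro y
    rw [map_add, _root_.map_smul, smul_eq_mul, proj_pencil, map_sub, map_sum]
    have : ∑ i, f (y i • proj b I (A i)) = ∑ i, y i * f (proj b I (A i)) :=
      Finset.sum_congr rfl fun i _ => by rw [_root_.map_smul, smul_eq_mul]
    rw [this]
    ring
  have hfz : ∀ y : Fin m → ℝ,
      f (proj b I (A0 - ∑ i, y i • A i) + (ε/2) • E0) < -u := by
    intro y
    have hmem : (0:Matrix (Fin n) (Fin n) ℝ)
        - (proj b I (A0 - ∑ i, y i • A i) + (ε/2) • E0) ∈ T :=
      ⟨0, Matrix.PosSemidef.zero, y, rfl⟩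
    have := hsep' _ hmem
    rw [map_sub, map_zero] at this
    linarith
  have hfA : ∀ i, f (proj b I (A i)) = 0 := by
    intro i0
    by_contra hne
    set tt := (f (proj b I A0) + (ε/2) * f E0 + u) / f (proj b I (A i0)) with htt
    have h := hfz (fun i => if i = i0 then tt else 0)
    rw [hexp] at h
    have hsum : ∑ i, (if i = i0 then tt else 0) * f (proj b I (A i))
        = tt * f (proj b I (A i0)) := by
      rw [Finset.sum_eq_single i0]
      · simp
      · intro i _ hi; simp [hi]
      · intro hmem; exact absurd (Finset.mem_univ _) hmem
    rw [hsum, htt, div_mul_cancel₀ _ hne] at h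
    linarith
  have hfE0 : 0 ≤ f E0 := hfP E0 hE0psd
  have hfA0 : f (proj b I A0) < 0 := by
    have h := hfz (fun _ => 0)
    rw [hexp] at h
    simp only [zero_mul, Finset.sum_const_zero, sub_zero] at h
    nlinarith
  -- representation of f by a matrix
  set Cf : Matrix (Fin n) (Fin n) ℝ :=
    Matrix.of (fun s t => f (Matrix.single s t 1)) with hCf
  have hfip : ∀ X : Matrix (Fin n) (Fin n) ℝ, f X = ip X Cf := by
    intro X
    rw [clm_repr f X, ip]
    rfl
  set Cs : Matrix (Fin n) (Fin n) ℝ := (1/2 : ℝ) • (Cf + Cfᵀ) with hCs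
  have hCspsd : Cs.PosSemidef := by
    refine Matrix.PosSemidef.of_dotProduct_mulVec_nonneg ?_ ?_
    · ext s t
      simp only [hCs, Matrix.conjTranspose_apply, Matrix.smul_apply, Matrix.add_apply,
        Matrix.transpose_apply, smul_eq_mul, star_trivial]
      ring
    · intro z
      rw [star_trivial]
      have h1 : z ⬝ᵥ Cs *ᵥ z = z ⬝ᵥ Cf *ᵥ z := by
        rw [hCs, Matrix.smul_mulVec, dotProduct_smul, Matrix.add_mulVec,
          dotProduct_add, quad_transpose, smul_eq_mul]
        ring
      have h2 : z ⬝ᵥ Cf *ᵥ z = f (Matrix.vecMulVec z z) := by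
        rw [hfip, ip, dotProduct_mulVec_eq]
        exact Finset.sum_congr rfl fun s _ => Finset.sum_congr rfl fun t _ => by
          rw [Matrix.vecMulVec_apply]; ring
      rw [h1, h2]
      exact hfP _ (vecMulVec_posSemidef z)
  set Xp : Matrix (Fin n) (Fin n) ℝ := proj b I Cs with hXp
  have hXppsd : Xp.PosSemidef := proj_posSemidef b I hCspsd
  have hipM : ∀ M : Matrix (Fin n) (Fin n) ℝ, M.IsSymm → ip M Xp = f (proj b I M) := by
    intro M hM
    rw [hfip, ip, ip]
    have hterm : ∀ s t : Fin n, M s t * Xp s t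
        = (1/2) * ((if b s = b t ∧ b s ∈ I then M s t * Cf s t else 0)
          + (if b s = b t ∧ b s ∈ I then M s t * Cf t s else 0)) := by
      intro s t
      rw [hXp, proj_apply]
      by_cases hc : b s = b t ∧ b s ∈ I
      · rw [if_pos hc, if_pos hc, if_pos hc, hCs]
        simp only [Matrix.smul_apply, Matrix.add_apply, Matrix.transpose_apply, smul_eq_mul]
        ring
      · rw [if_neg hc, if_neg hc, if_neg hc]
        ring
    have hswap : ∑ s, ∑ t, (if b s = b t ∧ b s ∈ I then M s t * Cf t s else 0)
        = ∑ s, ∑ t, (if b s = b t ∧ b s ∈ I then M s t * Cf s t else 0) := by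
      rw [Finset.sum_comm]
      refine Finset.sum_congr rfl fun s _ => Finset.sum_congr rfl fun t _ => ?_
      by_cases hc : b s = b t ∧ b s ∈ I
      · have hc' : b t = b s ∧ b t ∈ I := ⟨hc.1.symm, hc.1 ▸ hc.2⟩
        rw [if_pos hc', if_pos hc, hM.apply s t]
      · have hc' : ¬ (b t = b s ∧ b t ∈ I) := fun hh => hc ⟨hh.1.symm, hh.1 ▸ hh.2⟩
        rw [if_neg hc', if_neg hc]
    have hrhs : ∀ s t : Fin n, proj b I M s t * Cf s t
        = (if b s = b t ∧ b s ∈ I then M s t * Cf s t else 0) := by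
      intro s t
      rw [proj_apply]
      split_ifs <;> ring
    calc ∑ s, ∑ t, M s t * Xp s t
        = ∑ s, ∑ t, (1/2) * ((if b s = b t ∧ b s ∈ I then M s t * Cf s t else 0)
            + (if b s = b t ∧ b s ∈ I then M s t * Cf t s else 0)) :=
          Finset.sum_congr rfl fun s _ => Finset.sum_congr rfl fun t _ => hterm s t
      _ = (1/2) * ∑ s, ∑ t, ((if b s = b t ∧ b s ∈ I then M s t * Cf s t else 0)
            + (if b s = b t ∧ b s ∈ I then M s t * Cf t s else 0)) := by
          rw [Finset.mul_sum]
          exact Finset.sum_congr rfl fun s _ => by rw [Finset.mul_sum]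
      _ = (1/2) * ((∑ s, ∑ t, (if b s = b t ∧ b s ∈ I then M s t * Cf s t else 0))
            + ∑ s, ∑ t, (if b s = b t ∧ b s ∈ I then M s t * Cf t s else 0)) := by
          congr 1
          rw [← Finset.sum_add_distrib]
          exact Finset.sum_congr rfl fun s _ => Finset.sum_add_distrib
      _ = ∑ s, ∑ t, (if b s = b t ∧ b s ∈ I then M s t * Cf s t else 0) := by
          rw [hswap]; ring
      _ = ∑ s, ∑ t, proj b I M s t * Cf s t :=
          (Finset.sum_congr rfl fun s _ => Finset.sum_congr rfl fun t _ => (hrhs s t).symm)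
  have hipA : ∀ i, ip (A i) Xp = 0 := fun i => by rw [hipM _ (hA i), hfA i]
  have hipA0 : ip A0 Xp = f (proj b I A0) := hipM A0 hA0
  have hβneg : f (proj b I A0) < 0 := hfA0
  have hβne : -(f (proj b I A0)) ≠ 0 := by linarith
  refine ⟨(-(f (proj b I A0)))⁻¹ • Xp,
    psd_smul hXppsd (inv_nonneg.mpr (by linarith)), ?_, ?_, ?_⟩
  · intro s t hc
    have hz : Xp s t = 0 := by rw [hXp, proj_apply, if_neg hc]
    simp [Matrix.smul_apply, hz]
  · intro i
    rw [ip_smul_right, hipA i, mul_zero]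
  · rw [ip_smul_right, hipA0]
    field_simp
    rw [div_self (ne_of_lt hβneg)]

lemma cert {n m k : ℕ} (b : Fin n → Fin k)
    (A0 : Matrix (Fin n) (Fin n) ℝ) (A : Fin m → Matrix (Fin n) (Fin n) ℝ)
    (hA0 : A0.IsSymm) (hA : ∀ i, (A i).IsSymm)
    (J : Set (Fin k)) (X : Matrix (Fin n) (Fin n) ℝ) (hX : X.PosSemidef)
    (hsupp : ∀ s t, ¬ (b s = b t ∧ b s ∈ J) → X s t = 0)
    (htr : ∀ i, ip (A i) X = 0) (htr0 : ip A0 X = -1) :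
    ¬ WeaklyFeasibleOn A0 A {j | b j ∈ J} := by
  classical
  intro hfeas
  set T0 := X.trace with hT0
  have hT0nn : 0 ≤ T0 := trace_nonneg hX
  set ε : ℝ := (2 * (T0 + 1))⁻¹ with hεdef
  have hεpos : 0 < ε := by rw [hεdef]; positivity
  obtain ⟨y, hy⟩ := hfeas ε hεpos
  set M : Matrix (Fin n) (Fin n) ℝ :=
    A0 - ∑ i, y i • A i + ε • (1 : Matrix (Fin n) (Fin n) ℝ) with hM
  have hMsymm : M.IsSymm := by
    show Mᵀ = M
    rw [hM, Matrix.transpose_add, Matrix.transpose_sub, Matrix.transpose_smul,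
      Matrix.transpose_one, Matrix.transpose_sum, hA0]
    congr 1
    congr 1
    exact Finset.sum_congr rfl fun i _ => by rw [Matrix.transpose_smul, hA i]
  have hNpsd : (proj b J M).PosSemidef := by
    refine Matrix.PosSemidef.of_dotProduct_mulVec_nonneg ?_ ?_
    · show (proj b J M)ᴴ = proj b J M
      ext s t
      rw [Matrix.conjTranspose_apply, proj_apply, proj_apply, star_trivial]
      by_cases hc : b s = b t ∧ b s ∈ J
      · have hc' : b t = b s ∧ b t ∈ J := ⟨hc.1.symm, hc.1 ▸ hc.2⟩
        rw [if_pos hc', if_pos hc, hMsymm.apply s t]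
      · have hc' : ¬ (b t = b s ∧ b t ∈ J) := fun hh => hc ⟨hh.1.symm, hh.1 ▸ hh.2⟩
        rw [if_neg hc', if_neg hc]
    · intro z
      rw [star_trivial, proj_quadform]
      refine Finset.sum_nonneg fun i _ => ?_
      set zi : Fin n → ℝ := fun s => if b s = i ∧ i ∈ J then z s else 0 with hzi
      have hzsupp : ∀ j, j ∉ {j | b j ∈ J} → zi j = 0 := by
        intro j hj
        simp only [Set.mem_setOf_eq] at hj
        rw [hzi]
        dsimp only
        rw [if_neg]
        rintro ⟨h1, h2⟩
        exact hj (by rw [h1]; exact h2)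
      have hq := hy zi hzsupp
      have hMz : zi ⬝ᵥ M *ᵥ zi
          = zi ⬝ᵥ (A0 - ∑ i, y i • A i) *ᵥ zi + ε * (zi ⬝ᵥ zi) := by
        rw [hM, Matrix.add_mulVec, dotProduct_add, Matrix.smul_mulVec,
          dotProduct_smul, smul_eq_mul, Matrix.one_mulVec]
      rw [hMz]
      exact hq
  have h1 : 0 ≤ ip (proj b J M) X := psd_ip_nonneg hNpsd hX
  have h2 : ip (proj b J M) X = ip M X := by
    rw [ip, ip]
    refine Finset.sum_congr rfl fun s _ => Finset.sum_congr rfl fun t _ => ?_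
    rw [proj_apply]
    by_cases hc : b s = b t ∧ b s ∈ J
    · rw [if_pos hc]
    · rw [if_neg hc, hsupp s t hc]
      ring
  have h3 : ip M X = -1 + ε * T0 := by
    rw [hM, ip_add_left, ip_sub_left, htr0]
    have hsum : ip (∑ i, y i • A i) X = 0 := by
      rw [ip_sum_left]
      refine Finset.sum_eq_zero fun i _ => ?_
      rw [ip_smul_left, htr i, mul_zero]
    rw [hsum, ip_smul_left, ip_one, ← hT0]
    ring
  have hεT : ε * T0 < 1 := by
    have h2T : (0:ℝ) < 2 * (T0 + 1) := by positivity
    rw [hεdef, inv_mul_lt_iff₀ h2T]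
    nlinarith
  rw [h2, h3] at h1
  linarith

end Stmt7Aux

open Stmt7Aux in
theorem stmt_7 (n m k : ℕ) (b : Fin n → Fin k)
    (A0 : Matrix (Fin n) (Fin n) ℝ) (A : Fin m → Matrix (Fin n) (Fin n) ℝ)
    (hA0 : A0.IsSymm) (hA : ∀ i, (A i).IsSymm)
    (hA0b : IsBlockDiag b A0) (hAb : ∀ i, IsBlockDiag b (A i))
    (hinf : ¬ WeaklyFeasibleOn A0 A Set.univ)
    (I : Set (Fin k))
    (hIinf : ¬ WeaklyFeasibleOn A0 A {j | b j ∈ I})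
    (hImin : ∀ I' : Set (Fin k), I' ⊂ I → WeaklyFeasibleOn A0 A {j | b j ∈ I'}) :
    ∃ X ∈ Set.extremePoints ℝ
      {X : Matrix (Fin n) (Fin n) ℝ | X.PosSemidef ∧ IsBlockDiag b X ∧
        (∀ i, ((A i)ᵀ * X).trace = 0) ∧ (A0ᵀ * X).trace = -1},
      blockSupport b X = I := by
  classical
  set Cset := {X : Matrix (Fin n) (Fin n) ℝ | X.PosSemidef ∧ IsBlockDiag b X ∧
      (∀ i, ((A i)ᵀ * X).trace = 0) ∧ (A0ᵀ * X).trace = -1} with hCset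
  obtain ⟨X0, hX0psd, hX0supp, hX0tr, hX0tr0⟩ := exists_sol b A0 A hA0 hA hA0b hAb I hIinf
  have hX0mem : X0 ∈ Cset := by
    refine ⟨hX0psd, ?_, ?_, ?_⟩
    · intro s t hst; exact hX0supp s t (fun hc => hst hc.1)
    · intro i; rw [trace_eq_ip]; exact hX0tr i
    · rw [trace_eq_ip]; exact hX0tr0
  set CI := Cset ∩ {X : Matrix (Fin n) (Fin n) ℝ | ∀ s, b s ∉ I → X s s = 0} with hCI
  have hX0CI : X0 ∈ CI := ⟨hX0mem, fun s hs => hX0supp s s (fun hc => hs hc.2)⟩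
  -- continuity facts
  have hcont_entry : ∀ s t : Fin n, Continuous (fun X : Matrix (Fin n) (Fin n) ℝ => X s t) :=
    fun s t => (LinearMap.mk
      (AddHom.mk (fun X : Matrix (Fin n) (Fin n) ℝ => X s t) (fun X Y => rfl))
      (fun c X => rfl) : Matrix (Fin n) (Fin n) ℝ →ₗ[ℝ] ℝ).continuous_of_finiteDimensional
  have hcont_quad : ∀ z : Fin n → ℝ,
      Continuous (fun X : Matrix (Fin n) (Fin n) ℝ => star z ⬝ᵥ X *ᵥ z) :=
    fun z => (LinearMap.mk
      (AddHom.mk (fun X : Matrix (Fin n) (Fin n) ℝ => star z ⬝ᵥ X *ᵥ z)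
        (fun X Y => by rw [Matrix.add_mulVec, dotProduct_add]))
      (fun c X => by
        dsimp only
        simp only [RingHom.id_apply, smul_eq_mul]
        rw [Matrix.smul_mulVec, dotProduct_smul, smul_eq_mul]) :
      Matrix (Fin n) (Fin n) ℝ →ₗ[ℝ] ℝ).continuous_of_finiteDimensional
  have hcont_ct : Continuous (fun X : Matrix (Fin n) (Fin n) ℝ => Xᴴ) :=
    (LinearMap.mk (AddHom.mk (fun X : Matrix (Fin n) (Fin n) ℝ => Xᴴ)
        (fun X Y => Matrix.conjTranspose_add X Y))
      (fun c X => by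
        dsimp only
        simp only [RingHom.id_apply]
        rw [Matrix.conjTranspose_smul, star_trivial]) :
      Matrix (Fin n) (Fin n) ℝ →ₗ[ℝ] Matrix (Fin n) (Fin n) ℝ).continuous_of_finiteDimensional
  have hcont_tr : ∀ M : Matrix (Fin n) (Fin n) ℝ,
      Continuous (fun X : Matrix (Fin n) (Fin n) ℝ => (M * X).trace) :=
    fun M => (LinearMap.mk
      (AddHom.mk (fun X : Matrix (Fin n) (Fin n) ℝ => (M * X).trace)
        (fun X Y => by rw [Matrix.mul_add, Matrix.trace_add]))
      (fun c X => by
        dsimp only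
        simp only [RingHom.id_apply, smul_eq_mul]
        rw [Matrix.mul_smul, Matrix.trace_smul, smul_eq_mul]) :
      Matrix (Fin n) (Fin n) ℝ →ₗ[ℝ] ℝ).continuous_of_finiteDimensional
  have hcont_trace : Continuous (fun X : Matrix (Fin n) (Fin n) ℝ => X.trace) :=
    (Matrix.traceLinearMap (Fin n) ℝ ℝ).continuous_of_finiteDimensional
  -- CI is closed
  have hclosed : IsClosed CI := by
    have h1 : CI = {X : Matrix (Fin n) (Fin n) ℝ | Xᴴ = X}
        ∩ ((⋂ (z : Fin n → ℝ), {X : Matrix (Fin n) (Fin n) ℝ | 0 ≤ star z ⬝ᵥ X *ᵥ z})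
        ∩ ((⋂ p : Fin n × Fin n, {X : Matrix (Fin n) (Fin n) ℝ | b p.1 ≠ b p.2 → X p.1 p.2 = 0})
        ∩ ((⋂ i : Fin m, {X : Matrix (Fin n) (Fin n) ℝ | ((A i)ᵀ * X).trace = 0})
        ∩ ({X : Matrix (Fin n) (Fin n) ℝ | (A0ᵀ * X).trace = -1}
        ∩ (⋂ s : Fin n, {X : Matrix (Fin n) (Fin n) ℝ | b s ∉ I → X s s = 0}))))) := by
      ext X
      simp only [hCI, hCset, Set.mem_setOf_eq, Set.mem_inter_iff, Set.mem_iInter]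
      constructor
      · rintro ⟨⟨⟨hherm, hq⟩, hbd, htr, htr0⟩, hdiag⟩
        exact ⟨hherm, fun z => (Matrix.posSemidef_iff_dotProduct_mulVec.mp ⟨hherm, hq⟩).2 z, fun p h => hbd p.1 p.2 h, htr, htr0, hdiag⟩
      · rintro ⟨hherm, hq, hbd, htr, htr0, hdiag⟩
        exact ⟨⟨Matrix.posSemidef_iff_dotProduct_mulVec.mpr ⟨hherm, fun z => hq z⟩, fun s t h => hbd (s, t) h, htr, htr0⟩, hdiag⟩
    rw [h1]
    refine (isClosed_eq hcont_ct continuous_id).inter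
      ((isClosed_iInter fun z => isClosed_le continuous_const (hcont_quad z)).inter
      ((isClosed_iInter fun p => ?_).inter
      ((isClosed_iInter fun i => isClosed_eq (hcont_tr _) continuous_const).inter
      ((isClosed_eq (hcont_tr _) continuous_const).inter
      (isClosed_iInter fun s => ?_)))))
    · by_cases h : b p.1 = b p.2
      · have he : {X : Matrix (Fin n) (Fin n) ℝ | b p.1 ≠ b p.2 → X p.1 p.2 = 0} = Set.univ := by
          ext X; simp [h]
        rw [he]; exact isClosed_univ
      · have he : {X : Matrix (Fin n) (Fin n) ℝ | b p.1 ≠ b p.2 → X p.1 p.2 = 0}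
            = {X : Matrix (Fin n) (Fin n) ℝ | X p.1 p.2 = 0} := by
          ext X; simp [h]
        rw [he]; exact isClosed_eq (hcont_entry _ _) continuous_const
    · by_cases h : b s ∈ I
      · have he : {X : Matrix (Fin n) (Fin n) ℝ | b s ∉ I → X s s = 0} = Set.univ := by
          ext X; simp [h]
        rw [he]; exact isClosed_univ
      · have he : {X : Matrix (Fin n) (Fin n) ℝ | b s ∉ I → X s s = 0}
            = {X : Matrix (Fin n) (Fin n) ℝ | X s s = 0} := by
          ext X; simp [h]
        rw [he]; exact isClosed_eq (hcont_entry _ _) continuous_const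
  -- compact sublevel set
  set G := CI ∩ {X : Matrix (Fin n) (Fin n) ℝ | X.trace ≤ X0.trace} with hG
  have hGne : G.Nonempty := ⟨X0, hX0CI, show X0.trace ≤ X0.trace from le_refl _⟩
  have hGclosed : IsClosed G := hclosed.inter (isClosed_le hcont_trace continuous_const)
  have hGbdd : Bornology.IsBounded G := by
    have hX0trnn : 0 ≤ X0.trace := trace_nonneg hX0psd
    refine (Metric.isBounded_closedBall (x := (0 : Matrix (Fin n) (Fin n) ℝ))
      (r := X0.trace)).subset ?_
    rintro X ⟨hXCI, hXtr⟩
    rw [Metric.mem_closedBall, dist_zero_right]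
    rw [Matrix.norm_le_iff hX0trnn]
    intro s t
    rw [Real.norm_eq_abs]
    exact (psd_entry_le_trace hXCI.1.1 s t).trans hXtr
  have hGcompact : IsCompact G := Metric.isCompact_of_isClosed_isBounded hGclosed hGbdd
  obtain ⟨Xm, hXmG, hXmmin⟩ := hGcompact.exists_isMinOn hGne hcont_trace.continuousOn
  have hmin : ∀ X ∈ CI, Xm.trace ≤ X.trace := by
    intro X hX
    by_cases h : X.trace ≤ X0.trace
    · exact hXmmin ⟨hX, h⟩
    · push_neg at h
      have h1 : Xm.trace ≤ X0.trace := hXmmin ⟨hX0CI, show X0.trace ≤ X0.trace from le_refl _⟩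
      linarith
  set F := CI ∩ {X : Matrix (Fin n) (Fin n) ℝ | X.trace = Xm.trace} with hF
  have hXmCI : Xm ∈ CI := hXmG.1
  have hFne : F.Nonempty := ⟨Xm, hXmCI, rfl⟩
  have hFclosed : IsClosed F := hclosed.inter (isClosed_eq hcont_trace continuous_const)
  have hFsub : F ⊆ G := by
    rintro X ⟨hX, htr⟩
    refine ⟨hX, ?_⟩
    have := hXmG.2
    simp only [Set.mem_setOf_eq] at this ⊢
    rw [htr]
    exact this
  have hFcompact : IsCompact F := hGcompact.of_isClosed_subset hFclosed hFsub
  haveI : LocallyConvexSpace ℝ (Matrix (Fin n) (Fin n) ℝ) := NormedSpace.toLocallyConvexSpace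
  obtain ⟨Xe, hXeF⟩ := hFcompact.extremePoints_nonempty hFne
  -- extreme chain
  have hext1 : IsExtreme ℝ Cset CI := by
    constructor
    · exact fun X hX => hX.1
    · rintro Y hY Z hZ X ⟨hXC, hXd⟩ ⟨a, c, ha, hc, hac, hsum⟩
      have hkey : ∀ s, b s ∉ I → Y s s = 0 ∧ Z s s = 0 := by
        intro s hs
        have h0 : a * Y s s + c * Z s s = 0 := by
          have he : (a • Y + c • Z) s s = X s s := by rw [hsum]
          simp only [Matrix.add_apply, Matrix.smul_apply, smul_eq_mul] at he
          rw [he]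
          exact hXd s hs
        have hYs := psd_diag hY.1 s
        have hZs := psd_diag hZ.1 s
        constructor <;> nlinarith
      exact ⟨hY, fun s hs => (hkey s hs).1⟩
  have hext2 : IsExtreme ℝ CI F := by
    constructor
    · exact fun X hX => hX.1
    · rintro Y hY Z hZ X ⟨hXC, hXtr⟩ ⟨a, c, ha, hc, hac, hsum⟩
      simp only [Set.mem_setOf_eq] at hXtr
      have htreq : a * Y.trace + c * Z.trace = Xm.trace := by
        have he : (a • Y + c • Z).trace = X.trace := by rw [hsum]
        rwa [Matrix.trace_add, Matrix.trace_smul, Matrix.trace_smul, smul_eq_mul,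
          smul_eq_mul, hXtr] at he
      have hYt := hmin Y hY
      have hZt := hmin Z hZ
      have hYtr : Y.trace = Xm.trace := by
        by_contra hne
        have h : Xm.trace < Y.trace := lt_of_le_of_ne hYt (fun h => hne h.symm)
        have h1 : a * Xm.trace < a * Y.trace := mul_lt_mul_of_pos_left h ha
        have h2 : c * Xm.trace ≤ c * Z.trace := mul_le_mul_of_nonneg_left hZt (le_of_lt hc)
        have h3 : a * Xm.trace + c * Xm.trace = Xm.trace := by rw [← add_mul, hac, one_mul]
        linarith
      have hZtr : Z.trace = Xm.trace := by
        by_contra hne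
        have h : Xm.trace < Z.trace := lt_of_le_of_ne hZt (fun h => hne h.symm)
        have h1 : c * Xm.trace < c * Z.trace := mul_lt_mul_of_pos_left h hc
        have h2 : a * Xm.trace ≤ a * Y.trace := mul_le_mul_of_nonneg_left hYt (le_of_lt ha)
        have h3 : a * Xm.trace + c * Xm.trace = Xm.trace := by rw [← add_mul, hac, one_mul]
        linarith
      exact ⟨hY, hYtr⟩
  have hchain : IsExtreme ℝ Cset F := hext1.trans hext2
  have hXeext : Xe ∈ Set.extremePoints ℝ Cset := hchain.extremePoints_subset_extremePoints hXeF
  have hXeCI : Xe ∈ CI := (extremePoints_subset hXeF).1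
  refine ⟨Xe, hXeext, ?_⟩
  have hXepsd : Xe.PosSemidef := hXeCI.1.1
  have hsubI : blockSupport b Xe ⊆ I := by
    rintro i ⟨s, t, hbs, hbt, hne⟩
    by_contra hiI
    have hss : Xe s s = 0 := hXeCI.2 s (by rw [hbs]; exact hiI)
    exact hne (psd_row_zero hXepsd hss t)
  by_contra hneq
  have hssub : blockSupport b Xe ⊂ I := by
    rw [Set.ssubset_iff_subset_ne]
    exact ⟨hsubI, hneq⟩
  have hfeas := hImin _ hssub
  have hsupp : ∀ s t, ¬ (b s = b t ∧ b s ∈ blockSupport b Xe) → Xe s t = 0 := by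
    intro s t hc
    by_contra hne2
    apply hc
    have hbs : b s = b t := by
      by_contra hbst
      exact hne2 (hXeCI.1.2.1 s t hbst)
    exact ⟨hbs, ⟨s, t, rfl, hbs.symm, hne2⟩⟩
  exact absurd hfeas
    (cert b A0 A hA0 hA (blockSupport b Xe) Xe hXepsd hsupp
      (fun i => by rw [← trace_eq_ip]; exact hXeCI.1.2.2.1 i)
      (by rw [← trace_eq_ip]; exact hXeCI.1.2.2.2))
end

section
/- Let Σ: A(y) ⪰ 0 be a weakly infeasible block semidefinite system. For any X in the alternative spectrahedron S(Σ), the block subsystem of Σ indexed by the block support BS(X) is weakly infeasible. -/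
open Matrix

theorem stmt_8 (n m k : ℕ) (b : Fin n → Fin k)
    (A0 : Matrix (Fin n) (Fin n) ℝ) (A : Fin m → Matrix (Fin n) (Fin n) ℝ)
    (hA0 : A0.IsSymm) (hA : ∀ i, (A i).IsSymm)
    (hA0b : IsBlockDiag b A0) (hAb : ∀ i, IsBlockDiag b (A i))
    (hinf : ¬ WeaklyFeasibleOn A0 A Set.univ)
    (X : Matrix (Fin n) (Fin n) ℝ)
    (hX : X.PosSemidef ∧ IsBlockDiag b X ∧
      (∀ i, ((A i)ᵀ * X).trace = 0) ∧ (A0ᵀ * X).trace = -1) :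
    ¬ WeaklyFeasibleOn A0 A {j | b j ∈ blockSupport b X} := by
  obtain ⟨hPSD, hBD, hAtr, hA0tr⟩ := hX
  intro hWF
  open scoped MatrixOrder in set R := CFC.sqrt X with hRdef
  have hRR : R * R = X := by open scoped MatrixOrder in exact CFC.sqrt_mul_sqrt_self X hPSD.nonneg
  have hRsym : ∀ s t, R t s = R s t := by
    intro s t
    have h : Rᴴ = R := by open scoped MatrixOrder in exact (CFC.sqrt_nonneg X).posSemidef.isHermitian
    have := congrFun (congrFun h t) s
    simpa [Matrix.conjTranspose_apply] using this.symm
  -- entries of X as sums of products of R entries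
  have hXent : ∀ s t, X s t = ∑ j, R s j * R t j := by
    intro s t
    rw [← hRR, Matrix.mul_apply]
    exact Finset.sum_congr rfl fun j _ => by rw [hRsym t j]
  -- rows of R vanish outside the block support
  have hrow : ∀ s, b s ∉ blockSupport b X → ∀ t, R s t = 0 := by
    intro s hs t
    have hXss : X s s = 0 := by
      by_contra hne
      exact hs ⟨s, s, rfl, rfl, hne⟩
    have hsum : ∑ j, R s j * R s j = 0 := by rw [← hXent s s, hXss]
    have hz := (Finset.sum_eq_zero_iff_of_nonneg
      (fun j _ => mul_self_nonneg (R s j))).mp hsum t (Finset.mem_univ t)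
    exact mul_self_eq_zero.mp hz
  -- trace of X is nonnegative
  have hdiag : ∀ s, 0 ≤ X s s := by
    intro s
    rw [hXent s s]
    exact Finset.sum_nonneg fun j _ => mul_self_nonneg _
  have htr : 0 ≤ X.trace := Finset.sum_nonneg fun s _ => hdiag s
  -- choose ε
  set ε : ℝ := (2 * (X.trace + 1))⁻¹ with hεdef
  have hε : 0 < ε := by positivity
  obtain ⟨y, hy⟩ := hWF ε hε
  set M : Matrix (Fin n) (Fin n) ℝ := A0 - ∑ i, y i • A i with hMdef
  -- apply feasibility to each column of R
  have hq : ∀ j, 0 ≤ (fun s => R s j) ⬝ᵥ M.mulVec (fun s => R s j)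
      + ε * ((fun s => R s j) ⬝ᵥ (fun s => R s j)) := by
    intro j
    refine hy _ (fun s hs => hrow s hs j)
  have hsumq : 0 ≤ ∑ j, ((fun s => R s j) ⬝ᵥ M.mulVec (fun s => R s j)
      + ε * ((fun s => R s j) ⬝ᵥ (fun s => R s j))) :=
    Finset.sum_nonneg fun j _ => hq j
  -- compute the quadratic form sum
  have hQ1 : ∑ j, (fun s => R s j) ⬝ᵥ M.mulVec (fun s => R s j)
      = ∑ s, ∑ t, M s t * X s t := by
    simp only [dotProduct, Matrix.mulVec, Finset.mul_sum, Finset.sum_mul]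
    rw [Finset.sum_comm]
    refine Finset.sum_congr rfl fun s _ => ?_
    rw [Finset.sum_comm]
    refine Finset.sum_congr rfl fun t _ => ?_
    rw [hXent s t, Finset.mul_sum]
    exact Finset.sum_congr rfl fun j _ => by ring
  have hQ2 : ∑ j, (fun s => R s j) ⬝ᵥ (fun s => R s j) = X.trace := by
    simp only [dotProduct, Matrix.trace, Matrix.diag]
    rw [Finset.sum_comm]
    exact Finset.sum_congr rfl fun s _ => (hXent s s).symm
  -- compute ∑ s ∑ t, M s t * X s t = -1
  have htrM : ∀ (B : Matrix (Fin n) (Fin n) ℝ),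
      (Bᵀ * X).trace = ∑ s, ∑ t, B s t * X s t := by
    intro B
    simp only [Matrix.trace, Matrix.diag, Matrix.mul_apply, Matrix.transpose_apply]
    rw [Finset.sum_comm]
  have hQ3 : ∑ s, ∑ t, M s t * X s t = -1 := by
    rw [← htrM M, hMdef]
    have : (A0 - ∑ i, y i • A i)ᵀ = A0ᵀ - ∑ i, y i • (A i)ᵀ := by
      rw [Matrix.transpose_sub, Matrix.transpose_sum]
      simp [Matrix.transpose_smul]
    rw [this, Matrix.sub_mul, Matrix.trace_sub, Matrix.sum_mul, Matrix.trace_sum]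
    simp only [Matrix.smul_mul, Matrix.trace_smul, hAtr, smul_zero, Finset.sum_const_zero,
      hA0tr, smul_eq_mul]
    simp
  rw [Finset.sum_add_distrib, hQ1, hQ3, ← Finset.mul_sum, hQ2] at hsumq
  -- derive contradiction: -1 + ε * trace < 0
  have h1 : ε * X.trace < 1 := by
    rw [hεdef]
    rw [inv_mul_lt_iff₀ (by positivity)]
    nlinarith
  linarith
end

section
/- Let Σ: A(y) ⪰ 0 be a weakly infeasible block semidefinite system and let X ∈ S(Σ) have inclusion-minimal block support among all elements of S(Σ). Then BS(X) is the index set of an irreducible infeasible block subsystem (IIS) of Σ. -/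
open Matrix

/-- The alternative spectrahedron (restricted to block-diagonal matrices). -/
def altSpec {n m k : ℕ} (b : Fin n → Fin k) (A0 : Matrix (Fin n) (Fin n) ℝ)
    (A : Fin m → Matrix (Fin n) (Fin n) ℝ) : Set (Matrix (Fin n) (Fin n) ℝ) :=
  {X | X.PosSemidef ∧ IsBlockDiag b X ∧
    (∀ i, ((A i)ᵀ * X).trace = 0) ∧ (A0ᵀ * X).trace = -1}

/-! ### Auxiliary lemmas -/

section Aux

variable {n m k : ℕ}

lemma psd_diag_zero {X : Matrix (Fin n) (Fin n) ℝ} (hX : X.PosSemidef)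
    {j : Fin n} (h : X j j = 0) (t : Fin n) : X j t = 0 := by
  have hz : X *ᵥ (Pi.single j 1) = 0 := by
    rw [← hX.dotProduct_mulVec_zero_iff]
    simp [mulVec_single, dotProduct, Pi.single_apply, h]
  have hcol : X t j = 0 := by
    have := congrFun hz t
    simpa [mulVec_single, Matrix.mulVec, dotProduct, Pi.single_apply] using this
  have hsym : X j t = X t j := by
    have := congrFun (congrFun hX.1 t) j
    simpa [Matrix.conjTranspose_apply] using this
  rw [hsym, hcol]

lemma trace_BMBt (B M : Matrix (Fin n) (Fin n) ℝ) :
    (B * M * Bᴴ).trace = ∑ r, (B r) ⬝ᵥ M *ᵥ (B r) := by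
  simp only [Matrix.trace, Matrix.diag, Matrix.mul_apply, Matrix.conjTranspose_apply,
    star_trivial, dotProduct, Matrix.mulVec, Finset.sum_mul, Finset.mul_sum]
  refine Finset.sum_congr rfl fun r _ => ?_
  rw [Finset.sum_comm]
  exact Finset.sum_congr rfl fun s _ => Finset.sum_congr rfl fun t _ => by ring

lemma trace_BtB (B : Matrix (Fin n) (Fin n) ℝ) :
    (Bᴴ * B).trace = ∑ r, (B r) ⬝ᵥ (B r) := by
  simp only [Matrix.trace, Matrix.diag, Matrix.mul_apply, Matrix.conjTranspose_apply,
    star_trivial, dotProduct]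
  exact Finset.sum_comm

lemma trace_MX (A0 : Matrix (Fin n) (Fin n) ℝ) (A : Fin m → Matrix (Fin n) (Fin n) ℝ)
    (y : Fin m → ℝ) (X : Matrix (Fin n) (Fin n) ℝ) (hA0 : A0.IsSymm) (hA : ∀ i, (A i).IsSymm) :
    ((A0 - ∑ i, y i • A i) * X).trace
      = (A0ᵀ * X).trace - ∑ i, y i * ((A i)ᵀ * X).trace := by
  rw [hA0.eq]
  simp only [Matrix.sub_mul, Matrix.sum_mul, Matrix.smul_mul, trace_sub, trace_sum, trace_smul,
    smul_eq_mul]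
  congr 1
  exact Finset.sum_congr rfl fun i _ => by rw [(hA i).eq]

lemma quadform_eq' (M : Matrix (Fin n) (Fin n) ℝ) (x : Fin n → ℝ) :
    x ⬝ᵥ M *ᵥ x = ∑ s, ∑ t, x s * M s t * x t := by
  simp [dotProduct, Matrix.mulVec, Finset.mul_sum, mul_assoc]

lemma trace_tm' (A Z : Matrix (Fin n) (Fin n) ℝ) :
    (Aᵀ * Z).trace = ∑ t, ∑ s, A s t * Z s t := by
  simp [Matrix.trace, Matrix.mul_apply, Matrix.diag, Matrix.transpose_apply]

lemma dotProduct_self_nonneg' (x : Fin n → ℝ) : 0 ≤ x ⬝ᵥ x :=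
  Finset.sum_nonneg fun i _ => mul_self_nonneg (x i)

/-- Part 1: a member of the alternative spectrahedron whose diagonal vanishes off `S`
certifies weak infeasibility of the subsystem on `S`. -/
lemma part1 (b : Fin n → Fin k)
    (A0 : Matrix (Fin n) (Fin n) ℝ) (A : Fin m → Matrix (Fin n) (Fin n) ℝ)
    (hA0 : A0.IsSymm) (hA : ∀ i, (A i).IsSymm)
    (X : Matrix (Fin n) (Fin n) ℝ) (hX : X ∈ altSpec b A0 A)
    (S : Set (Fin n)) (hS : ∀ j, j ∉ S → X j j = 0) :
    ¬ WeaklyFeasibleOn A0 A S := by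
  obtain ⟨hpsd, hbd, htr, htr0⟩ := hX
  intro h
  set τ := X.trace with hτ
  have hτ0 : 0 ≤ τ := by
    have : ∀ s, 0 ≤ X s s := fun s => by
      have := hpsd.dotProduct_mulVec_nonneg (Pi.single s 1)
      simpa [mulVec_single, dotProduct, Pi.single_apply] using this
    exact Finset.sum_nonneg fun s _ => this s
  have hε : (0:ℝ) < 1/(τ+1) := by positivity
  obtain ⟨y, hy⟩ := h (1/(τ+1)) hε
  obtain ⟨B, hB⟩ : ∃ B : Matrix (Fin n) (Fin n) ℝ, X = Bᴴ * B := by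
    open scoped MatrixOrder Matrix.Norms.L2Operator in
    exact CStarAlgebra.nonneg_iff_eq_star_mul_self.mp hpsd.nonneg
  set M := A0 - ∑ i, y i • A i with hM
  have hrow : ∀ r j, j ∉ S → B r j = 0 := by
    intro r j hj
    have hXjj : X j j = 0 := hS j hj
    have hsum : ∑ r, B r j * B r j = 0 := by
      have := congrFun (congrFun hB j) j
      simp only [Matrix.mul_apply, Matrix.conjTranspose_apply, star_trivial] at this
      rw [← this, hXjj]
    have := (Finset.sum_eq_zero_iff_of_nonneg (fun r _ => mul_self_nonneg (B r j))).mp hsum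
      r (Finset.mem_univ r)
    nlinarith [this]
  have htrace : (M * X).trace = -1 := by
    rw [trace_MX A0 A y X hA0 hA, htr0]
    simp [htr]
  have hkey : 0 ≤ (M * X).trace + (1/(τ+1)) * τ := by
    have h1 : (M * X).trace = ∑ r, (B r) ⬝ᵥ M *ᵥ (B r) := by
      rw [hB, ← Matrix.mul_assoc, trace_mul_comm, ← Matrix.mul_assoc, trace_BMBt]
    have h2 : τ = ∑ r, (B r) ⬝ᵥ (B r) := by rw [hτ, hB, trace_BtB]
    have hsum : 0 ≤ ∑ r, ((B r) ⬝ᵥ M *ᵥ (B r) + 1/(τ+1) * ((B r) ⬝ᵥ (B r))) :=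
      Finset.sum_nonneg fun r _ => hy (B r) (fun j hj => hrow r j hj)
    rw [Finset.sum_add_distrib, ← Finset.mul_sum, ← h2, ← h1] at hsum
    exact hsum
  rw [htrace] at hkey
  have hlt : τ / (τ + 1) < 1 := by
    rw [div_lt_one (by linarith)]; linarith
  rw [div_mul_eq_mul_div, one_mul] at hkey
  linarith

/-! ### The pinching (block-diagonal restriction) of a rank-one matrix -/

def pinch (b : Fin n → Fin k) (x : Fin n → ℝ) : Matrix (Fin n) (Fin n) ℝ :=
  Matrix.of fun s t => if b s = b t then x s * x t else 0

lemma pinch_apply (b : Fin n → Fin k) (x : Fin n → ℝ) (s t : Fin n) :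
    pinch b x s t = if b s = b t then x s * x t else 0 := rfl

lemma pinch_quad (b : Fin n → Fin k) (x v : Fin n → ℝ) :
    v ⬝ᵥ (pinch b x) *ᵥ v =
      ∑ i, (∑ s, if b s = i then v s * x s else 0) * (∑ s, if b s = i then v s * x s else 0) := by
  have step1 : v ⬝ᵥ (pinch b x) *ᵥ v
      = ∑ s, ∑ t, (if b s = b t then (v s * x s) * (v t * x t) else 0) := by
    simp only [dotProduct, Matrix.mulVec, pinch, Matrix.of_apply, Finset.mul_sum, mul_ite,
      ite_mul, mul_zero, zero_mul]
    exact Finset.sum_congr rfl fun s _ => Finset.sum_congr rfl fun t _ => by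
      split <;> ring
  have step2 : ∀ s t : Fin n, (if b s = b t then (v s * x s) * (v t * x t) else 0)
      = ∑ i, (if b s = i then v s * x s else 0) * (if b t = i then v t * x t else 0) := by
    intro s t
    have : ∀ i : Fin k, (if b s = i then v s * x s else 0) * (if b t = i then v t * x t else 0)
        = if b s = i then ((v s * x s) * if b t = b s then v t * x t else 0) else 0 := by
      intro i
      by_cases h1 : b s = i
      · subst h1; simp
      · simp [h1]
    rw [Finset.sum_congr rfl fun i _ => this i, Finset.sum_ite_eq]
    rw [if_pos (Finset.mem_univ _)]
    by_cases h : b s = b t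
    · rw [if_pos h, if_pos h.symm]
    · rw [if_neg h, if_neg (fun hh => h hh.symm), mul_zero]
  rw [step1]
  rw [Finset.sum_congr rfl fun s _ => Finset.sum_congr rfl fun t _ => step2 s t]
  rw [Finset.sum_congr rfl fun s (_ : s ∈ Finset.univ) => Finset.sum_comm]
  rw [Finset.sum_comm]
  exact Finset.sum_congr rfl fun i _ => (Finset.sum_mul_sum _ _ _ _).symm

lemma pinch_trace (b : Fin n → Fin k) (x : Fin n → ℝ) : (pinch b x).trace = x ⬝ᵥ x := by
  simp [Matrix.trace, Matrix.diag, pinch, dotProduct]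

lemma pinch_traceA (b : Fin n → Fin k) (x : Fin n → ℝ) (A : Matrix (Fin n) (Fin n) ℝ)
    (hAb : ∀ s t, b s ≠ b t → A s t = 0) : (Aᵀ * pinch b x).trace = x ⬝ᵥ A *ᵥ x := by
  rw [trace_tm', quadform_eq', Finset.sum_comm]
  refine Finset.sum_congr rfl fun s _ => Finset.sum_congr rfl fun t _ => ?_
  rw [pinch_apply]
  by_cases h : b s = b t
  · rw [if_pos h]; ring
  · rw [if_neg h, hAb s t h]; ring

lemma sum_smul_mulVec (y : Fin m → ℝ) (A : Fin m → Matrix (Fin n) (Fin n) ℝ)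
    (x : Fin n → ℝ) : (∑ i, y i • A i) *ᵥ x = ∑ i, y i • ((A i) *ᵥ x) := by
  ext j
  simp only [Matrix.mulVec, dotProduct, Matrix.sum_apply, Matrix.smul_apply, Finset.sum_apply,
    Pi.smul_apply, smul_eq_mul, Finset.sum_mul, Finset.mul_sum]
  rw [Finset.sum_comm]
  exact Finset.sum_congr rfl fun i _ => Finset.sum_congr rfl fun t _ => by ring

lemma quad_sub_sum (A0 : Matrix (Fin n) (Fin n) ℝ) (A : Fin m → Matrix (Fin n) (Fin n) ℝ)
    (y : Fin m → ℝ) (x : Fin n → ℝ) :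
    x ⬝ᵥ (A0 - ∑ i, y i • A i) *ᵥ x
      = x ⬝ᵥ A0 *ᵥ x - ∑ i, y i * (x ⬝ᵥ (A i) *ᵥ x) := by
  rw [sub_mulVec, dotProduct_sub, sum_smul_mulVec]
  congr 1
  simp only [dotProduct, Finset.sum_apply, Pi.smul_apply, smul_eq_mul, Finset.mul_sum]
  rw [Finset.sum_comm]
  exact Finset.sum_congr rfl fun i _ => Finset.sum_congr rfl fun j _ => by ring

/-! ### The compact normalized section of the cone of supported psd block matrices -/

def Zet (b : Fin n → Fin k) (I' : Set (Fin k)) : Set (Matrix (Fin n) (Fin n) ℝ) :=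
  {Z | (∀ v, 0 ≤ v ⬝ᵥ Z *ᵥ v) ∧ (∀ s t, Z s t = Z t s) ∧
    (∀ s t, b s ≠ b t → Z s t = 0) ∧ (∀ s t, ¬(b s ∈ I' ∧ b t ∈ I') → Z s t = 0) ∧
    Z.trace = 1}

lemma cont_entry (s t : Fin n) : Continuous fun Z : Matrix (Fin n) (Fin n) ℝ => Z s t :=
  continuous_id.matrix_elem s t

lemma cont_quad (v : Fin n → ℝ) :
    Continuous fun Z : Matrix (Fin n) (Fin n) ℝ => v ⬝ᵥ Z *ᵥ v := by
  have : (fun Z : Matrix (Fin n) (Fin n) ℝ => v ⬝ᵥ Z *ᵥ v)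
      = fun Z => ∑ s, ∑ t, v s * Z s t * v t := by
    funext Z; simp [dotProduct, Matrix.mulVec, Finset.mul_sum, mul_assoc]
  rw [this]
  exact continuous_finset_sum _ fun s _ => continuous_finset_sum _ fun t _ =>
    ((continuous_const.mul (cont_entry s t)).mul continuous_const)

lemma cont_traceA (A : Matrix (Fin n) (Fin n) ℝ) :
    Continuous fun Z : Matrix (Fin n) (Fin n) ℝ => (Aᵀ * Z).trace :=
  (continuous_const.matrix_mul continuous_id).matrix_trace

lemma Zet_closed (b : Fin n → Fin k) (I' : Set (Fin k)) : IsClosed (Zet b I') := by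
  have h1 : IsClosed {Z : Matrix (Fin n) (Fin n) ℝ | ∀ v, 0 ≤ v ⬝ᵥ Z *ᵥ v} := by
    have e : {Z : Matrix (Fin n) (Fin n) ℝ | ∀ v, 0 ≤ v ⬝ᵥ Z *ᵥ v}
        = ⋂ v, {Z | 0 ≤ v ⬝ᵥ Z *ᵥ v} := by ext; simp
    rw [e]; exact isClosed_iInter fun v => isClosed_le continuous_const (cont_quad v)
  have h2 : IsClosed {Z : Matrix (Fin n) (Fin n) ℝ | ∀ s t, Z s t = Z t s} := by
    have e : {Z : Matrix (Fin n) (Fin n) ℝ | ∀ s t, Z s t = Z t s}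
        = ⋂ s, ⋂ t, {Z | Z s t = Z t s} := by ext; simp
    rw [e]
    exact isClosed_iInter fun s => isClosed_iInter fun t =>
      isClosed_eq (cont_entry s t) (cont_entry t s)
  have h3 : IsClosed {Z : Matrix (Fin n) (Fin n) ℝ | ∀ s t, b s ≠ b t → Z s t = 0} := by
    have e : {Z : Matrix (Fin n) (Fin n) ℝ | ∀ s t, b s ≠ b t → Z s t = 0}
        = ⋂ s, ⋂ t, ⋂ (_ : b s ≠ b t), {Z | Z s t = 0} := by ext; simp
    rw [e]
    exact isClosed_iInter fun s => isClosed_iInter fun t => isClosed_iInter fun _ =>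
      isClosed_eq (cont_entry s t) continuous_const
  have h4 : IsClosed {Z : Matrix (Fin n) (Fin n) ℝ | ∀ s t, ¬(b s ∈ I' ∧ b t ∈ I') → Z s t = 0} := by
    have e : {Z : Matrix (Fin n) (Fin n) ℝ | ∀ s t, ¬(b s ∈ I' ∧ b t ∈ I') → Z s t = 0}
        = ⋂ s, ⋂ t, ⋂ (_ : ¬(b s ∈ I' ∧ b t ∈ I')), {Z | Z s t = 0} := by ext; simp
    rw [e]
    exact isClosed_iInter fun s => isClosed_iInter fun t => isClosed_iInter fun _ =>
      isClosed_eq (cont_entry s t) continuous_const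
  have h5 : IsClosed {Z : Matrix (Fin n) (Fin n) ℝ | Z.trace = 1} :=
    isClosed_eq (continuous_id.matrix_trace) continuous_const
  exact h1.inter (h2.inter (h3.inter (h4.inter h5)))

lemma box_compact : IsCompact {Z : Matrix (Fin n) (Fin n) ℝ | ∀ s t, Z s t ∈ Set.Icc (-1:ℝ) 1} := by
  have h : IsCompact (Set.pi Set.univ fun _ : Fin n =>
      (Set.pi Set.univ fun _ : Fin n => Set.Icc (-1:ℝ) 1)) :=
    isCompact_univ_pi fun _ => isCompact_univ_pi fun _ => isCompact_Icc
  refine Eq.subst (motive := fun S : Set (Matrix (Fin n) (Fin n) ℝ) => IsCompact S) (Eq.symm ?_) h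
  ext Z
  constructor
  · intro hZ
    intro s _
    intro t _
    exact hZ s t
  · intro hZ s t
    exact hZ s (Set.mem_univ s) t (Set.mem_univ t)

lemma quad_pair {Z : Matrix (Fin n) (Fin n) ℝ} (hq : ∀ v, 0 ≤ v ⬝ᵥ Z *ᵥ v)
    (s t : Fin n) (c : ℝ) :
    0 ≤ Z s s + c * Z s t + c * Z t s + c * c * Z t t := by
  have := hq ((Pi.single s (1:ℝ) : Fin n → ℝ) + c • (Pi.single t (1:ℝ) : Fin n → ℝ))
  simp only [add_dotProduct, dotProduct_add, Matrix.mulVec_add, Matrix.mulVec_smul,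
    smul_dotProduct, dotProduct_smul, smul_eq_mul, Matrix.mulVec_single,
    single_dotProduct, MulOpposite.op_one, one_smul, col_apply, one_mul] at this
  nlinarith [this]

lemma Zet_bounded (b : Fin n → Fin k) (I' : Set (Fin k)) :
    Zet b I' ⊆ {Z : Matrix (Fin n) (Fin n) ℝ | ∀ s t, Z s t ∈ Set.Icc (-1:ℝ) 1} := by
  rintro Z ⟨hq, hsym, -, -, htr⟩ s t
  have hdiag : ∀ u, 0 ≤ Z u u := by
    intro u
    have := quad_pair hq u u 0
    simpa using this
  have hdiag1 : ∀ u, Z u u ≤ 1 := by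
    intro u
    have hle : Z u u ≤ Z.trace := Finset.single_le_sum (fun v _ => hdiag v) (Finset.mem_univ u)
    rw [htr] at hle; exact hle
  by_cases hst : s = t
  · subst hst
    exact ⟨by linarith [hdiag s], hdiag1 s⟩
  have h1 := quad_pair hq s t 1
  have h2 := quad_pair hq s t (-1)
  have hs' := hsym s t
  constructor
  · nlinarith [hdiag1 s, hdiag1 t]
  · nlinarith [hdiag1 s, hdiag1 t]

lemma Zet_compact (b : Fin n → Fin k) (I' : Set (Fin k)) : IsCompact (Zet b I') :=
  box_compact.of_isClosed_subset (Zet_closed b I') (Zet_bounded b I')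

lemma psd_of_quad {Z : Matrix (Fin n) (Fin n) ℝ} (hsym : ∀ s t, Z s t = Z t s)
    (hq : ∀ v, 0 ≤ v ⬝ᵥ Z *ᵥ v) : Z.PosSemidef := by
  refine PosSemidef.of_dotProduct_mulVec_nonneg ?_ ?_
  · ext s t
    simp only [Matrix.conjTranspose_apply, star_trivial]
    exact hsym t s
  · intro v
    simpa using hq v

lemma Zx_mem (b : Fin n → Fin k) (I' : Set (Fin k)) (x : Fin n → ℝ)
    (hxI : ∀ j, b j ∉ I' → x j = 0) (hd : x ⬝ᵥ x ≠ 0) :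
    ((x ⬝ᵥ x)⁻¹ • pinch b x) ∈ Zet b I' := by
  refine ⟨fun v => ?_, fun s t => ?_, fun s t h => ?_, fun s t h => ?_, ?_⟩
  · rw [smul_mulVec, dotProduct_smul, smul_eq_mul]
    refine mul_nonneg (inv_nonneg.mpr (dotProduct_self_nonneg' x)) ?_
    rw [pinch_quad]
    exact Finset.sum_nonneg fun i _ => mul_self_nonneg _
  · simp only [Matrix.smul_apply, pinch_apply, smul_eq_mul]
    congr 1
    by_cases h : b s = b t
    · rw [if_pos h, if_pos h.symm, mul_comm]
    · rw [if_neg h, if_neg (fun hh => h hh.symm)]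
  · simp [Matrix.smul_apply, pinch_apply, if_neg h]
  · simp only [Matrix.smul_apply, pinch_apply, smul_eq_mul]
    rcases not_and_or.mp h with h1 | h1
    · rw [hxI s h1]; simp
    · rw [hxI t h1]; simp
  · rw [trace_smul, pinch_trace, smul_eq_mul, inv_mul_cancel₀ hd]

lemma f_decomp (f : ((Fin m → ℝ) × ℝ) →L[ℝ] ℝ) (a : Fin m → ℝ) (t : ℝ) :
    f (a, t) = (∑ i, a i * f ((Pi.single i 1 : Fin m → ℝ), (0:ℝ)))
      + t * f ((0 : Fin m → ℝ), (1:ℝ)) := by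
  have h : ((a, t) : (Fin m → ℝ) × ℝ)
      = (∑ i, a i • ((Pi.single i 1 : Fin m → ℝ), (0:ℝ))) + t • ((0 : Fin m → ℝ), (1:ℝ)) := by
    have h1 : (∑ i, a i • ((Pi.single i 1 : Fin m → ℝ), (0:ℝ))).1 = a := by
      rw [Prod.fst_sum]
      funext j
      rw [Finset.sum_apply]
      simp only [Prod.smul_fst, Pi.smul_apply, Pi.single_apply, smul_eq_mul, mul_ite, mul_one,
        mul_zero]
      rw [Finset.sum_ite_eq Finset.univ j a]
      simp
    have h2 : (∑ i, a i • ((Pi.single i 1 : Fin m → ℝ), (0:ℝ))).2 = 0 := by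
      rw [Prod.snd_sum]; simp
    rw [Prod.ext_iff]
    refine ⟨?_, ?_⟩
    · rw [Prod.fst_add, h1]; simp
    · rw [Prod.snd_add, h2]; simp
  rw [h, map_add, map_sum, ContinuousLinearMap.map_smul]
  simp only [smul_eq_mul]
  congr 1
  exact Finset.sum_congr rfl fun i _ => by rw [ContinuousLinearMap.map_smul]; simp

lemma quad_lower_bound (A0 : Matrix (Fin n) (Fin n) ℝ) (x : Fin n → ℝ) :
    -((∑ s, ∑ t, |A0 s t|) * (x ⬝ᵥ x)) ≤ x ⬝ᵥ A0 *ᵥ x := by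
  rw [quadform_eq']
  have hsq : ∀ s, x s * x s ≤ x ⬝ᵥ x := fun s =>
    Finset.single_le_sum (f := fun i => x i * x i) (fun i _ => mul_self_nonneg (x i))
      (Finset.mem_univ s)
  have habs : ∀ s t : Fin n, |x s * x t| ≤ x ⬝ᵥ x := by
    intro s t
    have h1 := hsq s; have h2 := hsq t
    rw [abs_mul]
    nlinarith [sq_nonneg (|x s| - |x t|), abs_nonneg (x s), abs_nonneg (x t),
      abs_mul_abs_self (x s), abs_mul_abs_self (x t)]
  have hterm : ∀ s t : Fin n, -(|A0 s t| * (x ⬝ᵥ x)) ≤ x s * A0 s t * x t := by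
    intro s t
    have eabs : |x s * A0 s t * x t| = |A0 s t| * |x s * x t| := by
      rw [abs_mul, abs_mul, abs_mul]; ring
    have h3 : |x s * A0 s t * x t| ≤ |A0 s t| * (x ⬝ᵥ x) := by
      rw [eabs]; exact mul_le_mul_of_nonneg_left (habs s t) (abs_nonneg _)
    linarith [neg_abs_le (x s * A0 s t * x t)]
  have e : (∑ s, ∑ t, |A0 s t|) * (x ⬝ᵥ x) = ∑ s, ∑ t, |A0 s t| * (x ⬝ᵥ x) := by
    rw [Finset.sum_mul]
    exact Finset.sum_congr rfl fun s _ => Finset.sum_mul _ _ _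
  rw [e, ← Finset.sum_neg_distrib]
  refine Finset.sum_le_sum fun s _ => ?_
  rw [← Finset.sum_neg_distrib]
  exact Finset.sum_le_sum fun t _ => hterm s t

end Aux

theorem stmt_9 (n m k : ℕ) (b : Fin n → Fin k)
    (A0 : Matrix (Fin n) (Fin n) ℝ) (A : Fin m → Matrix (Fin n) (Fin n) ℝ)
    (hA0 : A0.IsSymm) (hA : ∀ i, (A i).IsSymm)
    (hA0b : IsBlockDiag b A0) (hAb : ∀ i, IsBlockDiag b (A i))
    (hinf : ¬ WeaklyFeasibleOn A0 A Set.univ)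
    (X : Matrix (Fin n) (Fin n) ℝ)
    (hX : X ∈ altSpec b A0 A)
    (hmin : ∀ Y ∈ altSpec b A0 A,
      blockSupport b Y ⊆ blockSupport b X → blockSupport b Y = blockSupport b X) :
    ¬ WeaklyFeasibleOn A0 A {j | b j ∈ blockSupport b X} ∧
    ∀ I' : Set (Fin k), I' ⊂ blockSupport b X →
      WeaklyFeasibleOn A0 A {j | b j ∈ I'} := by
  constructor
  · refine part1 b A0 A hA0 hA X hX _ ?_
    intro j hj
    by_contra hne
    exact hj ⟨j, j, rfl, rfl, hne⟩
  · intro I' hI'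
    by_contra hfail
    -- From the failure of weak feasibility, produce an element of the alternative
    -- spectrahedron supported in I', contradicting minimality of the support of X.
    rw [WeaklyFeasibleOn] at hfail
    push_neg at hfail
    obtain ⟨ε, hε, hbad⟩ := hfail
    have main : ∃ Y ∈ altSpec b A0 A, blockSupport b Y ⊆ I' := by
      by_cases hexist : ∃ Z ∈ Zet b I', (∀ i, ((A i)ᵀ * Z).trace = 0) ∧ (A0ᵀ * Z).trace ≤ -ε
      · obtain ⟨Z, hZ, hz1, hz2⟩ := hexist
        obtain ⟨hq, hsym, hbd, hsupp, htrZ⟩ := hZ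
        have hd : (A0ᵀ * Z).trace < 0 := lt_of_le_of_lt hz2 (by linarith)
        set c := (-(A0ᵀ * Z).trace)⁻¹ with hc
        have hc0 : 0 < c := by
          rw [hc]; exact inv_pos.mpr (by linarith)
        refine ⟨c • Z, ⟨?_, ?_, ?_, ?_⟩, ?_⟩
        · apply psd_of_quad
          · intro s t; simp [Matrix.smul_apply, hsym s t]
          · intro v
            rw [smul_mulVec, dotProduct_smul, smul_eq_mul]
            exact mul_nonneg hc0.le (hq v)
        · intro s t hst; simp [Matrix.smul_apply, hbd s t hst]
        · intro i; rw [Matrix.mul_smul, trace_smul, hz1 i, smul_eq_mul, mul_zero]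
        · rw [Matrix.mul_smul, trace_smul, smul_eq_mul, hc]
          rw [inv_mul_eq_div, div_eq_iff (by linarith)]
          ring
        · rintro i ⟨s, t, rfl, hbt, hne⟩
          by_contra hbs
          apply hne
          have : Z s t = 0 := hsupp s t (fun hh => hbs hh.1)
          simp [Matrix.smul_apply, this]
      · push_neg at hexist
        exfalso
        set φ : Matrix (Fin n) (Fin n) ℝ → (Fin m → ℝ) × ℝ :=
          fun Z => (fun i => ((A i)ᵀ * Z).trace, (A0ᵀ * Z).trace) with hφ
        have hφcont : Continuous φ :=
          (continuous_pi fun i => cont_traceA (A i)).prodMk (cont_traceA A0)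
        have hKcompact : IsCompact (φ '' Zet b I') := (Zet_compact b I').image hφcont
        have hKconvex : Convex ℝ (φ '' Zet b I') := by
          rintro p ⟨Z1, hZ1, rfl⟩ q ⟨Z2, hZ2, rfl⟩ a c ha hc hac
          refine ⟨a • Z1 + c • Z2, ?_, ?_⟩
          · obtain ⟨q1, s1, b1, u1, t1⟩ := hZ1
            obtain ⟨q2, s2, b2, u2, t2⟩ := hZ2
            refine ⟨fun v => ?_, fun s t => ?_, fun s t h => ?_, fun s t h => ?_, ?_⟩
            · rw [add_mulVec, dotProduct_add, smul_mulVec, smul_mulVec,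
                dotProduct_smul, dotProduct_smul, smul_eq_mul, smul_eq_mul]
              exact add_nonneg (mul_nonneg ha (q1 v)) (mul_nonneg hc (q2 v))
            · simp [Matrix.add_apply, Matrix.smul_apply, s1 s t, s2 s t]
            · simp [Matrix.add_apply, Matrix.smul_apply, b1 s t h, b2 s t h]
            · simp [Matrix.add_apply, Matrix.smul_apply, u1 s t h, u2 s t h]
            · rw [trace_add, trace_smul, trace_smul, t1, t2]
              simpa using hac
          · have e : ∀ B : Matrix (Fin n) (Fin n) ℝ, (Bᵀ * (a • Z1 + c • Z2)).trace
                = a * (Bᵀ * Z1).trace + c * (Bᵀ * Z2).trace := by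
              intro B
              rw [mul_add, Matrix.mul_smul, Matrix.mul_smul, trace_add, trace_smul, trace_smul]
              simp
            rw [Prod.ext_iff]
            constructor
            · funext i
              simp [hφ, e]
            · simp [hφ, e]
        set T : Set ((Fin m → ℝ) × ℝ) := {p | (∀ i, p.1 i = 0) ∧ p.2 ≤ -ε} with hT
        have hTconvex : Convex ℝ T := by
          rintro p ⟨hp1, hp2⟩ q ⟨hq1, hq2⟩ a c ha hc hac
          constructor
          · intro i
            simp [hp1 i, hq1 i]
          · have h1 : a * p.2 ≤ a * (-ε) := mul_le_mul_of_nonneg_left hp2 ha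
            have h2 : c * q.2 ≤ c * (-ε) := mul_le_mul_of_nonneg_left hq2 hc
            have : (a • p + c • q).2 = a * p.2 + c * q.2 := by simp
            rw [this]
            nlinarith [h1, h2]
        have hTclosed : IsClosed T := by
          have e : T = (⋂ i, {p : (Fin m → ℝ) × ℝ | p.1 i = 0}) ∩ {p | p.2 ≤ -ε} := by
            ext p; simp [hT]
          rw [e]
          exact (isClosed_iInter fun i =>
            isClosed_eq ((continuous_apply i).comp continuous_fst) continuous_const).inter
            (isClosed_le continuous_snd continuous_const)
        have hdisj : Disjoint (φ '' Zet b I') T := by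
          rw [Set.disjoint_left]
          rintro p ⟨Z, hZ, rfl⟩ ⟨hp1, hp2⟩
          exact absurd hp2 (not_le.mpr (hexist Z hZ (fun i => hp1 i)))
        obtain ⟨f, u, v, hfu, huv, hvt⟩ :=
          geometric_hahn_banach_compact_closed hKconvex hKcompact hTconvex hTclosed hdisj
        set s0 := f ((0 : Fin m → ℝ), (1:ℝ)) with hs0def
        set yy : Fin m → ℝ := fun i => f ((Pi.single i 1 : Fin m → ℝ), (0:ℝ)) with hyydef
        have hfT : ∀ r : ℝ, r ≤ -ε → v < r * s0 := by
          intro r hr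
          have hmem : (((0 : Fin m → ℝ), r) : (Fin m → ℝ) × ℝ) ∈ T := ⟨fun i => rfl, hr⟩
          have h := hvt _ hmem
          rw [f_decomp] at h
          simpa [← hs0def] using h
        have hs0 : s0 ≤ 0 := by
          by_contra hpos
          push_neg at hpos
          have hr : min (-ε) ((v-1)/s0) ≤ -ε := min_le_left _ _
          have h2 := hfT _ hr
          have h3 : min (-ε) ((v-1)/s0) * s0 ≤ (v-1)/s0 * s0 :=
            mul_le_mul_of_nonneg_right (min_le_right _ _) hpos.le
          rw [div_mul_cancel₀ _ (ne_of_gt hpos)] at h3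
          linarith
        have hKlt : ∀ Z ∈ Zet b I',
            (∑ i, ((A i)ᵀ * Z).trace * yy i) + ((A0ᵀ * Z).trace) * s0 < v := by
          intro Z hZ
          have h := hfu (φ Z) (Set.mem_image_of_mem φ hZ)
          rw [hφ] at h
          simp only at h
          rw [f_decomp] at h
          rw [← hs0def] at h
          have : (∑ i, ((A i)ᵀ * Z).trace * yy i) + ((A0ᵀ * Z).trace) * s0 < u := by
            convert h using 2
          linarith
        rcases hs0.lt_or_eq with hneg | h0
        · -- s0 < 0
          set σ := -s0 with hσdef
          have hσ : 0 < σ := by rw [hσdef]; linarith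
          obtain ⟨x, hxsupp, hxlt⟩ := hbad (fun i => yy i / σ)
          have hdpos : 0 < x ⬝ᵥ x := by
            rcases eq_or_lt_of_le (dotProduct_self_nonneg' x) with h | h
            · exfalso
              have hx0 : x = 0 := dotProduct_self_eq_zero.mp h.symm
              rw [hx0] at hxlt
              simpa using hxlt
            · exact h
          have hxI : ∀ j, b j ∉ I' → x j = 0 := fun j hj => hxsupp j hj
          have hZx := Zx_mem b I' x hxI (ne_of_gt hdpos)
          have htrA : ∀ i, ((A i)ᵀ * ((x ⬝ᵥ x)⁻¹ • pinch b x)).trace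
              = (x ⬝ᵥ x)⁻¹ * (x ⬝ᵥ (A i) *ᵥ x) := fun i => by
            rw [Matrix.mul_smul, trace_smul, smul_eq_mul, pinch_traceA b x (A i) (hAb i)]
          have htrA0 : (A0ᵀ * ((x ⬝ᵥ x)⁻¹ • pinch b x)).trace
              = (x ⬝ᵥ x)⁻¹ * (x ⬝ᵥ A0 *ᵥ x) := by
            rw [Matrix.mul_smul, trace_smul, smul_eq_mul, pinch_traceA b x A0 hA0b]
          have hK := hKlt _ hZx
          rw [htrA0] at hK
          simp only [htrA] at hK
          have e1 : ∑ i, ((x ⬝ᵥ x)⁻¹ * (x ⬝ᵥ (A i) *ᵥ x)) * yy i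
              = (x ⬝ᵥ x)⁻¹ * ∑ i, (x ⬝ᵥ (A i) *ᵥ x) * yy i := by
            rw [Finset.mul_sum]
            exact Finset.sum_congr rfl fun i _ => by ring
          rw [e1] at hK
          set SY := ∑ i, (x ⬝ᵥ (A i) *ᵥ x) * yy i with hSY
          have hvlt : v < ε * σ := by
            have h := hfT (-ε) le_rfl
            have : (-ε) * s0 = ε * σ := by rw [hσdef]; ring
            linarith [this ▸ h]
          have hK2 : SY + (x ⬝ᵥ A0 *ᵥ x) * s0 < (x ⬝ᵥ x) * (ε * σ) := by
            have hh := mul_lt_mul_of_pos_left (lt_trans hK hvlt) hdpos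
            have e2 : (x ⬝ᵥ x) * ((x ⬝ᵥ x)⁻¹ * SY + (x ⬝ᵥ x)⁻¹ * (x ⬝ᵥ A0 *ᵥ x) * s0)
                = SY + (x ⬝ᵥ A0 *ᵥ x) * s0 := by
              field_simp
            rw [e2] at hh
            exact hh
          rw [quad_sub_sum] at hxlt
          have e3 : ∑ i, (yy i / σ) * (x ⬝ᵥ (A i) *ᵥ x) = σ⁻¹ * SY := by
            rw [hSY, Finset.mul_sum]
            exact Finset.sum_congr rfl fun i _ => by
              rw [div_eq_inv_mul]; ring
          rw [e3] at hxlt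
          have hK3 := mul_lt_mul_of_pos_left hxlt hσ
          have e4 : σ * ((x ⬝ᵥ A0 *ᵥ x) - σ⁻¹ * SY + ε * (x ⬝ᵥ x))
              = σ * (x ⬝ᵥ A0 *ᵥ x) - SY + σ * (ε * (x ⬝ᵥ x)) := by
            field_simp
          rw [e4, mul_zero] at hK3
          have hs0eq : s0 = -σ := by rw [hσdef]; ring
          rw [hs0eq] at hK2
          nlinarith [hK2, hK3]
        · -- s0 = 0
          have hv0 : v < 0 := by
            have h := hfT (-ε) le_rfl
            rw [h0, mul_zero] at h
            exact h
          set C := ∑ s, ∑ t, |A0 s t| with hC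
          have hC0 : 0 ≤ C :=
            Finset.sum_nonneg fun s _ => Finset.sum_nonneg fun t _ => abs_nonneg _
          set R := C / (-v) with hR
          have hR0 : 0 ≤ R := div_nonneg hC0 (by linarith)
          obtain ⟨x, hxsupp, hxlt⟩ := hbad (fun i => R * yy i)
          have hdpos : 0 < x ⬝ᵥ x := by
            rcases eq_or_lt_of_le (dotProduct_self_nonneg' x) with h | h
            · exfalso
              have hx0 : x = 0 := dotProduct_self_eq_zero.mp h.symm
              rw [hx0] at hxlt
              simpa using hxlt
            · exact h
          have hxI : ∀ j, b j ∉ I' → x j = 0 := fun j hj => hxsupp j hj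
          have hZx := Zx_mem b I' x hxI (ne_of_gt hdpos)
          have htrA : ∀ i, ((A i)ᵀ * ((x ⬝ᵥ x)⁻¹ • pinch b x)).trace
              = (x ⬝ᵥ x)⁻¹ * (x ⬝ᵥ (A i) *ᵥ x) := fun i => by
            rw [Matrix.mul_smul, trace_smul, smul_eq_mul, pinch_traceA b x (A i) (hAb i)]
          have hK := hKlt _ hZx
          simp only [htrA, ← h0] at hK
          rw [h0, mul_zero, add_zero] at hK
          have e1 : ∑ i, ((x ⬝ᵥ x)⁻¹ * (x ⬝ᵥ (A i) *ᵥ x)) * yy i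
              = (x ⬝ᵥ x)⁻¹ * ∑ i, (x ⬝ᵥ (A i) *ᵥ x) * yy i := by
            rw [Finset.mul_sum]
            exact Finset.sum_congr rfl fun i _ => by ring
          rw [e1] at hK
          set SY := ∑ i, (x ⬝ᵥ (A i) *ᵥ x) * yy i with hSY
          have hSYlt : SY < (x ⬝ᵥ x) * v := by
            have hh := mul_lt_mul_of_pos_left hK hdpos
            have e2 : (x ⬝ᵥ x) * ((x ⬝ᵥ x)⁻¹ * SY) = SY := by field_simp
            rw [e2] at hh
            exact hh
          rw [quad_sub_sum] at hxlt
          have e3 : ∑ i, (R * yy i) * (x ⬝ᵥ (A i) *ᵥ x) = R * SY := by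
            rw [hSY, Finset.mul_sum]
            exact Finset.sum_congr rfl fun i _ => by ring
          rw [e3] at hxlt
          have hq0 : -(C * (x ⬝ᵥ x)) ≤ x ⬝ᵥ A0 *ᵥ x := quad_lower_bound A0 x
          have hRS : R * SY ≤ R * ((x ⬝ᵥ x) * v) :=
            mul_le_mul_of_nonneg_left (le_of_lt hSYlt) hR0
          have hvne : v ≠ 0 := ne_of_lt hv0
          have hRv : R * ((x ⬝ᵥ x) * v) = -(C * (x ⬝ᵥ x)) := by
            rw [hR, div_mul_eq_mul_div, div_eq_iff (neg_ne_zero.mpr hvne)]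
            ring
          rw [hRv] at hRS
          nlinarith [mul_pos hε hdpos]
    obtain ⟨Y, hYmem, hYsub⟩ := main
    have heq := hmin Y hYmem (hYsub.trans hI'.1)
    have : blockSupport b X ⊆ I' := heq ▸ hYsub
    exact hI'.2 this
end

section
/- Let A_1,...,A_m ∈ S^n be block-diagonal w.r.t. blocks B_1,...,B_k and let t ≥ 0. Then the following are equivalent: (i) for every positive semidefinite block matrix X^0 with σ^B_+(X^0) ≤ t, the set {X ⪰ 0 : ⟨A_i,X⟩ = ⟨A_i,X^0⟩, i ∈ [m]} equals {X^0}; (ii) every symmetric block matrix V ≠ 0 with ⟨A_i,V⟩ = 0 for all i ∈ [m] satisfies σ^B_+(V) > t and σ^B_-(V) > t. -/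
open Matrix

/-- Number of blocks of `V` having at least one positive eigenvalue, expressed via
the quadratic form on vectors supported on the block. -/
noncomputable def sigmaPlus {n k : ℕ} (b : Fin n → Fin k)
    (V : Matrix (Fin n) (Fin n) ℝ) : ℕ :=
  Set.ncard {i : Fin k | ∃ x : Fin n → ℝ, (∀ j, b j ≠ i → x j = 0) ∧
    0 < x ⬝ᵥ V.mulVec x}

/-- Number of blocks of `V` having at least one negative eigenvalue. -/
noncomputable def sigmaMinus {n k : ℕ} (b : Fin n → Fin k)
    (V : Matrix (Fin n) (Fin n) ℝ) : ℕ :=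
  Set.ncard {i : Fin k | ∃ x : Fin n → ℝ, (∀ j, b j ≠ i → x j = 0) ∧
    x ⬝ᵥ V.mulVec x < 0}

open Polynomial

section Aux

variable {n k : ℕ} {b : Fin n → Fin k}

lemma IsBlockDiag.sub' {X Y} (hX : IsBlockDiag b X) (hY : IsBlockDiag b Y) :
    IsBlockDiag b (X - Y) := fun s t h => by
  simp [Matrix.sub_apply, hX s t h, hY s t h]

/-- Block-diagonal matrices form a subalgebra. -/
def bdAlg (b : Fin n → Fin k) : Subalgebra ℝ (Matrix (Fin n) (Fin n) ℝ) where
  carrier := {X | IsBlockDiag b X}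
  mul_mem' := by
    intro X Y hX hY s t h
    rw [Matrix.mul_apply]
    apply Finset.sum_eq_zero
    intro u _
    by_cases hu : b u = b t
    · rw [hX s u (hu ▸ h), zero_mul]
    · rw [hY u t hu, mul_zero]
  add_mem' := by
    intro X Y hX hY s t h
    simp [Matrix.add_apply, hX s t h, hY s t h]
  one_mem' := by
    intro s t h
    exact Matrix.one_apply_ne (fun hst => h (hst ▸ rfl))
  zero_mem' := by intro s t h; rfl
  algebraMap_mem' := by
    intro r s t h
    simp [Matrix.algebraMap_eq_diagonal,
      Matrix.diagonal_apply_ne _ (fun hst : s = t => h (hst ▸ rfl))]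

lemma isBlockDiag_aeval {V} (hV : IsBlockDiag b V) (p : Polynomial ℝ) :
    IsBlockDiag b (Polynomial.aeval V p) := by
  have h1 : Polynomial.aeval V p ∈ Algebra.adjoin ℝ {V} :=
    Polynomial.aeval_mem_adjoin_singleton ℝ V
  have h2 : Algebra.adjoin ℝ {V} ≤ bdAlg b :=
    Algebra.adjoin_le (Set.singleton_subset_iff.mpr hV)
  exact h2 h1

lemma mulVec_supp {V : Matrix (Fin n) (Fin n) ℝ} (hV : IsBlockDiag b V)
    {x : Fin n → ℝ} {i : Fin k} (hx : ∀ j, b j ≠ i → x j = 0) :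
    ∀ j, b j ≠ i → (V *ᵥ x) j = 0 := by
  intro j hj
  simp only [Matrix.mulVec, dotProduct]
  apply Finset.sum_eq_zero
  intro u _
  by_cases h : b u = i
  · rw [hV j u (by rw [h]; exact hj), zero_mul]
  · rw [hx u h, mul_zero]

lemma psd_isSymm {X : Matrix (Fin n) (Fin n) ℝ} (hX : X.PosSemidef) : Xᵀ = X := by
  have := hX.1
  rwa [Matrix.IsHermitian, Matrix.conjTranspose_eq_transpose_of_trivial] at this

/-- Transfer lemma: a positive direction of `P` on block `i` yields a positive
direction of `P - Q` on block `i`, provided `Q * P = 0`. -/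
lemma transfer {P Q : Matrix (Fin n) (Fin n) ℝ}
    (hP : P.PosSemidef) (hPbd : IsBlockDiag b P) (hQP : Q * P = 0)
    {i : Fin k} {x : Fin n → ℝ} (hsupp : ∀ j, b j ≠ i → x j = 0)
    (hpos : 0 < x ⬝ᵥ P *ᵥ x) :
    ∃ y : Fin n → ℝ, (∀ j, b j ≠ i → y j = 0) ∧ 0 < y ⬝ᵥ (P - Q) *ᵥ y := by
  have hsymm : Pᵀ = P := psd_isSymm hP
  refine ⟨P *ᵥ x, mulVec_supp hPbd hsupp, ?_⟩
  have hQy : Q *ᵥ (P *ᵥ x) = 0 := by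
    rw [Matrix.mulVec_mulVec, hQP, Matrix.zero_mulVec]
  rw [Matrix.sub_mulVec, hQy, sub_zero]
  -- goal: 0 < (P *ᵥ x) ⬝ᵥ P *ᵥ (P *ᵥ x)
  have h0 : 0 ≤ (P *ᵥ x) ⬝ᵥ P *ᵥ (P *ᵥ x) := by simpa using hP.dotProduct_mulVec_nonneg (P *ᵥ x)
  rcases h0.lt_or_eq with h | h
  · exact h
  · exfalso
    have hPy : P *ᵥ (P *ᵥ x) = 0 :=
      (hP.dotProduct_mulVec_zero_iff (P *ᵥ x)).mp (by simpa using h.symm)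
    have hvm : x ᵥ* P = P *ᵥ x := by
      conv_lhs => rw [← hsymm]
      rw [Matrix.vecMul_transpose]
    have h1 : x ⬝ᵥ (P *ᵥ (P *ᵥ x)) = (P *ᵥ x) ⬝ᵥ (P *ᵥ x) := by
      rw [Matrix.dotProduct_mulVec, hvm]
    rw [hPy, dotProduct_zero] at h1
    have hy0 : P *ᵥ x = 0 := dotProduct_self_eq_zero.mp h1.symm
    rw [hy0, dotProduct_zero] at hpos
    exact lt_irrefl _ hpos

/-- Spectral decomposition of a symmetric block-diagonal matrix into
block-diagonal PSD positive and negative parts. -/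
lemma exists_decomp {V : Matrix (Fin n) (Fin n) ℝ}
    (hs : V.IsSymm) (hbd : IsBlockDiag b V) :
    ∃ P Q : Matrix (Fin n) (Fin n) ℝ, P.PosSemidef ∧ Q.PosSemidef ∧
      IsBlockDiag b P ∧ IsBlockDiag b Q ∧ V = P - Q ∧ P * Q = 0 ∧ Q * P = 0 := by
  have hV : V.IsHermitian := by
    rwa [Matrix.IsHermitian, Matrix.conjTranspose_eq_transpose_of_trivial]
  set U : Matrix (Fin n) (Fin n) ℝ := (hV.eigenvectorUnitary : Matrix (Fin n) (Fin n) ℝ)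
    with hUdef
  have hU : star U * U = 1 := Matrix.mem_unitaryGroup_iff'.mp hV.eigenvectorUnitary.2
  have hU' : U * star U = 1 := Matrix.mem_unitaryGroup_iff.mp hV.eigenvectorUnitary.2
  set e := hV.eigenvalues with hedef
  have key : ∀ d₁ d₂ : Fin n → ℝ, (U * diagonal d₁ * star U) * (U * diagonal d₂ * star U)
      = U * diagonal (fun j => d₁ j * d₂ j) * star U := by
    intro d₁ d₂
    have hdd : diagonal d₁ * diagonal d₂ = diagonal (fun j => d₁ j * d₂ j) := by
      rw [Matrix.diagonal_mul_diagonal]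
    calc (U * diagonal d₁ * star U) * (U * diagonal d₂ * star U)
        = U * (diagonal d₁ * ((star U * U) * (diagonal d₂ * star U))) := by
          simp only [Matrix.mul_assoc]
      _ = U * diagonal (fun j => d₁ j * d₂ j) * star U := by
          rw [hU, one_mul, ← Matrix.mul_assoc (diagonal d₁), hdd, Matrix.mul_assoc]
  have psd : ∀ d : Fin n → ℝ, (∀ j, 0 ≤ d j) → (U * diagonal d * star U).PosSemidef := by
    intro d hd
    have h1 : (diagonal d).PosSemidef := Matrix.posSemidef_diagonal_iff.mpr hd
    simpa [Matrix.star_eq_conjTranspose] using h1.mul_mul_conjTranspose_same U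
  have hVspec : V = U * diagonal e * star U := by
    simpa [RCLike.ofReal_real_eq_id] using hV.spectral_theorem
  have aev : ∀ p : Polynomial ℝ, Polynomial.aeval V p
      = U * diagonal (fun j => p.eval (e j)) * star U := by
    intro p
    induction p using Polynomial.induction_on with
    | C a =>
        simp only [Polynomial.aeval_C, Polynomial.eval_C]
        rw [Algebra.algebraMap_eq_smul_one]
        have hdc : (diagonal (fun _ : Fin n => a)) = a • (1 : Matrix (Fin n) (Fin n) ℝ) := by
          ext i j
          by_cases h : i = j <;> simp [Matrix.diagonal_apply, Matrix.one_apply, h]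
        rw [hdc, Matrix.mul_smul, Matrix.smul_mul, Matrix.mul_one, hU']
    | add p q hp hq =>
        simp only [map_add, hp, hq, Polynomial.eval_add]
        have hda : (diagonal fun j => Polynomial.eval (e j) p + Polynomial.eval (e j) q)
            = diagonal (fun j => Polynomial.eval (e j) p)
              + diagonal (fun j => Polynomial.eval (e j) q) := by
          rw [← Matrix.diagonal_add]
        rw [hda, Matrix.mul_add, Matrix.add_mul]
    | monomial N a ih =>
        have h1 : (Polynomial.C a) * Polynomial.X ^ (N + 1)
            = ((Polynomial.C a) * Polynomial.X ^ N) * Polynomial.X := by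
          rw [pow_succ, mul_assoc]
        rw [h1, _root_.map_mul, ih, Polynomial.aeval_X, hVspec, key]
        congr 1
        · congr 1
          funext j
          simp [pow_succ, mul_assoc]
  -- interpolation polynomial
  set sp : Finset ℝ := Finset.image e Finset.univ with hspdef
  set p : Polynomial ℝ := Lagrange.interpolate sp id (fun x => max x 0) with hpdef
  have hpeval : ∀ j, p.eval (e j) = max (e j) 0 := by
    intro j
    have hmem : e j ∈ sp := Finset.mem_image_of_mem e (Finset.mem_univ j)
    have := Lagrange.eval_interpolate_at_node (v := id) (r := fun x => max x 0)
      (Set.injOn_id _) hmem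
    exact this
  set Pd : Fin n → ℝ := fun j => max (e j) 0 with hPddef
  set Qd : Fin n → ℝ := Pd - e with hQddef
  have hPform : Polynomial.aeval V p = U * diagonal Pd * star U := by
    rw [aev]
    have hfe : (fun j => p.eval (e j)) = Pd := funext hpeval
    rw [hfe]
  have hQform : Polynomial.aeval V p - V = U * diagonal Qd * star U := by
    rw [hPform]
    conv_lhs => rw [hVspec]
    rw [← Matrix.sub_mul, ← Matrix.mul_sub]
    congr 2
    rw [Matrix.diagonal_sub, hQddef]
    rfl
  have hQd0 : ∀ j, 0 ≤ Qd j := by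
    intro j
    simp only [hQddef, Pi.sub_apply, hPddef]
    exact sub_nonneg.mpr (le_max_left _ _)
  have hprod0 : ∀ j, Pd j * Qd j = 0 := by
    intro j
    simp only [hQddef, Pi.sub_apply, hPddef]
    rcases le_total (e j) 0 with h | h
    · rw [max_eq_right h, zero_mul]
    · rw [max_eq_left h, sub_self, mul_zero]
  have hdiag0 : ∀ d : Fin n → ℝ, (∀ j, d j = 0) → U * diagonal d * star U = 0 := by
    intro d hd
    have : d = fun _ => (0 : ℝ) := funext hd
    rw [this]
    simp
  refine ⟨Polynomial.aeval V p, Polynomial.aeval V p - V, ?_, ?_, ?_, ?_, ?_, ?_, ?_⟩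
  · rw [hPform]; exact psd Pd (fun j => le_max_right _ _)
  · rw [hQform]; exact psd Qd hQd0
  · exact isBlockDiag_aeval hbd p
  · exact (isBlockDiag_aeval hbd p).sub' hbd
  · rw [sub_sub_cancel]
  · rw [hQform, hPform, key]
    exact hdiag0 _ hprod0
  · rw [hQform, hPform, key]
    exact hdiag0 _ (fun j => by rw [mul_comm]; exact hprod0 j)

end Aux

theorem stmt_10 (n m k : ℕ) (b : Fin n → Fin k)
    (A : Fin m → Matrix (Fin n) (Fin n) ℝ)
    (hA : ∀ i, (A i).IsSymm) (hAb : ∀ i, IsBlockDiag b (A i))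
    (t : ℕ) :
    (∀ X0 : Matrix (Fin n) (Fin n) ℝ, X0.PosSemidef → IsBlockDiag b X0 →
      sigmaPlus b X0 ≤ t →
      {X : Matrix (Fin n) (Fin n) ℝ | X.PosSemidef ∧ IsBlockDiag b X ∧
        ∀ i, ((A i)ᵀ * X).trace = ((A i)ᵀ * X0).trace} = {X0}) ↔
    (∀ V : Matrix (Fin n) (Fin n) ℝ, V.IsSymm → IsBlockDiag b V → V ≠ 0 →
      (∀ i, ((A i)ᵀ * V).trace = 0) →
      t < sigmaPlus b V ∧ t < sigmaMinus b V) := by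
  constructor
  · -- (i) → (ii)
    intro huniq V hVs hVbd hVne hVtr
    obtain ⟨P, Q, hPpsd, hQpsd, hPbd, hQbd, hVPQ, hPQ, hQP⟩ := exists_decomp hVs hVbd
    have hQPV : Q = P - V := by rw [hVPQ, sub_sub_cancel]
    -- subset for plus
    have hsubP : {i : Fin k | ∃ x : Fin n → ℝ, (∀ j, b j ≠ i → x j = 0) ∧
        0 < x ⬝ᵥ P.mulVec x} ⊆ {i : Fin k | ∃ x : Fin n → ℝ, (∀ j, b j ≠ i → x j = 0) ∧
        0 < x ⬝ᵥ V.mulVec x} := by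
      rintro i ⟨x, hsupp, hpos⟩
      obtain ⟨y, hy1, hy2⟩ := transfer hPpsd hPbd hQP hsupp hpos
      exact ⟨y, hy1, by rwa [← hVPQ] at hy2⟩
    have hsubQ : {i : Fin k | ∃ x : Fin n → ℝ, (∀ j, b j ≠ i → x j = 0) ∧
        0 < x ⬝ᵥ Q.mulVec x} ⊆ {i : Fin k | ∃ x : Fin n → ℝ, (∀ j, b j ≠ i → x j = 0) ∧
        x ⬝ᵥ V.mulVec x < 0} := by
      rintro i ⟨x, hsupp, hpos⟩
      obtain ⟨y, hy1, hy2⟩ := transfer hQpsd hQbd hPQ hsupp hpos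
      refine ⟨y, hy1, ?_⟩
      have hQP' : Q - P = -V := by rw [hVPQ]; abel
      rw [hQP'] at hy2
      simp only [Matrix.neg_mulVec, dotProduct_neg] at hy2
      linarith
    have hsP : sigmaPlus b P ≤ sigmaPlus b V := Set.ncard_le_ncard hsubP (Set.toFinite _)
    have hsQ : sigmaPlus b Q ≤ sigmaMinus b V := Set.ncard_le_ncard hsubQ (Set.toFinite _)
    have htr : ∀ i, ((A i)ᵀ * Q).trace = ((A i)ᵀ * P).trace := by
      intro i
      rw [hQPV, Matrix.mul_sub, Matrix.trace_sub, hVtr i, sub_zero]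
    constructor
    · by_contra hcon
      push_neg at hcon
      have hset := huniq P hPpsd hPbd (le_trans hsP hcon)
      have hmem : Q ∈ {X : Matrix (Fin n) (Fin n) ℝ | X.PosSemidef ∧ IsBlockDiag b X ∧
          ∀ i, ((A i)ᵀ * X).trace = ((A i)ᵀ * P).trace} := ⟨hQpsd, hQbd, htr⟩
      rw [hset] at hmem
      have : Q = P := hmem
      apply hVne
      rw [hVPQ, this, sub_self]
    · by_contra hcon
      push_neg at hcon
      have hset := huniq Q hQpsd hQbd (le_trans hsQ hcon)
      have hmem : P ∈ {X : Matrix (Fin n) (Fin n) ℝ | X.PosSemidef ∧ IsBlockDiag b X ∧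
          ∀ i, ((A i)ᵀ * X).trace = ((A i)ᵀ * Q).trace} :=
        ⟨hPpsd, hPbd, fun i => (htr i).symm⟩
      rw [hset] at hmem
      have : P = Q := hmem
      apply hVne
      rw [hVPQ, this, sub_self]
  · -- (ii) → (i)
    intro hcrit X0 hX0psd hX0bd hX0t
    apply Set.eq_singleton_iff_unique_mem.mpr
    refine ⟨⟨hX0psd, hX0bd, fun i => rfl⟩, ?_⟩
    rintro X ⟨hXpsd, hXbd, hXtr⟩
    by_contra hne
    have hVne : X - X0 ≠ 0 := sub_ne_zero.mpr hne
    have hVs : (X - X0).IsSymm := by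
      unfold Matrix.IsSymm
      rw [Matrix.transpose_sub, psd_isSymm hXpsd, psd_isSymm hX0psd]
    have hVbd : IsBlockDiag b (X - X0) := hXbd.sub' hX0bd
    have hVtr : ∀ i, ((A i)ᵀ * (X - X0)).trace = 0 := by
      intro i
      rw [Matrix.mul_sub, Matrix.trace_sub, hXtr i, sub_self]
    have hlt := (hcrit (X - X0) hVs hVbd hVne hVtr).2
    have hsub : {i : Fin k | ∃ x : Fin n → ℝ, (∀ j, b j ≠ i → x j = 0) ∧
        x ⬝ᵥ (X - X0).mulVec x < 0} ⊆ {i : Fin k | ∃ x : Fin n → ℝ, (∀ j, b j ≠ i → x j = 0) ∧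
        0 < x ⬝ᵥ X0.mulVec x} := by
      rintro i ⟨x, hsupp, hneg⟩
      refine ⟨x, hsupp, ?_⟩
      rw [Matrix.sub_mulVec, dotProduct_sub] at hneg
      have hXx : 0 ≤ x ⬝ᵥ X.mulVec x := by simpa using hXpsd.dotProduct_mulVec_nonneg x
      linarith
    have : sigmaMinus b (X - X0) ≤ sigmaPlus b X0 :=
      Set.ncard_le_ncard hsub (Set.toFinite _)
    omega
end

section
/- (Necessity direction) Let A_1,...,A_m ∈ S^n be block-diagonal. If there exists a symmetric block matrix V ≠ 0 with ⟨A_i,V⟩ = 0 for all i ∈ [m] and σ^B_-(V) ≤ t, then there exist distinct positive semidefinite matrices X^1 ≠ X^2 with σ^B_+(X^1) ≤ t and ⟨A_i,X^1⟩ = ⟨A_i,X^2⟩ for all i ∈ [m]. -/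
open Matrix

lemma quad_expand {n : ℕ} (V : Matrix (Fin n) (Fin n) ℝ) (x : Fin n → ℝ) :
    x ⬝ᵥ V *ᵥ x = ∑ s, ∑ t, x s * V s t * x t := by
  simp [dotProduct, mulVec, Finset.mul_sum, mul_assoc]

lemma quad_lower {n : ℕ} (V : Matrix (Fin n) (Fin n) ℝ) (x : Fin n → ℝ) :
    -((∑ s, ∑ t, |V s t|) * ∑ j, x j ^ 2) ≤ x ⬝ᵥ V *ᵥ x := by
  rw [quad_expand]
  have h : ∀ s t : Fin n, -( |V s t| * ∑ j, x j ^ 2) ≤ x s * V s t * x t := by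
    intro s t
    have h1 : |x s * V s t * x t| ≤ |V s t| * ∑ j, x j ^ 2 := by
      have hs : x s ^ 2 ≤ ∑ j, x j ^ 2 :=
        Finset.single_le_sum (fun j _ => sq_nonneg (x j)) (Finset.mem_univ s)
      have ht : x t ^ 2 ≤ ∑ j, x j ^ 2 :=
        Finset.single_le_sum (fun j _ => sq_nonneg (x j)) (Finset.mem_univ t)
      have h2 : |x s| * |x t| ≤ ∑ j, x j ^ 2 := by
        nlinarith [abs_nonneg (x s), abs_nonneg (x t), sq_abs (x s), sq_abs (x t),
          sq_nonneg (|x s| - |x t|)]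
      calc |x s * V s t * x t| = |V s t| * (|x s| * |x t|) := by
            rw [abs_mul, abs_mul]; ring
        _ ≤ |V s t| * ∑ j, x j ^ 2 := mul_le_mul_of_nonneg_left h2 (abs_nonneg _)
    linarith [neg_abs_le (x s * V s t * x t)]
  calc -((∑ s, ∑ t, |V s t|) * ∑ j, x j ^ 2)
      = ∑ s, ∑ t, -( |V s t| * ∑ j, x j ^ 2) := by
        rw [Finset.sum_mul]
        rw [← Finset.sum_neg_distrib]
        apply Finset.sum_congr rfl; intro s _
        rw [Finset.sum_mul, ← Finset.sum_neg_distrib]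
    _ ≤ ∑ s, ∑ t, x s * V s t * x t := by
        apply Finset.sum_le_sum; intro s _
        apply Finset.sum_le_sum; intro t _
        exact h s t

lemma quad_split {n k : ℕ} (b : Fin n → Fin k) (V : Matrix (Fin n) (Fin n) ℝ)
    (hVb : ∀ s t, b s ≠ b t → V s t = 0) (x : Fin n → ℝ) :
    x ⬝ᵥ V *ᵥ x = ∑ i : Fin k,
      (fun j => if b j = i then x j else 0) ⬝ᵥ V *ᵥ (fun j => if b j = i then x j else 0) := by
  have key : ∀ s t : Fin n,
      (∑ i : Fin k, (if b s = i then x s else 0) * V s t * (if b t = i then x t else 0))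
        = x s * V s t * x t := by
    intro s t
    by_cases h : b s = b t
    · rw [Finset.sum_eq_single (b s)]
      · simp [h]
      · intro i _ hi
        rw [if_neg (fun hh => hi hh.symm), zero_mul, zero_mul]
      · simp
    · rw [hVb s t h, mul_zero, zero_mul]
      apply Finset.sum_eq_zero
      intro i _
      by_cases hs : b s = i
      · rw [if_neg (fun ht : b t = i => h (hs.trans ht.symm)), mul_zero]
      · rw [if_neg hs, zero_mul, zero_mul]
  rw [quad_expand, Finset.sum_congr rfl (fun i (_ : i ∈ Finset.univ) => quad_expand V _)]
  conv_rhs => rw [Finset.sum_comm]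
  apply Finset.sum_congr rfl; intro s _
  conv_rhs => rw [Finset.sum_comm]
  apply Finset.sum_congr rfl; intro t _
  exact (key s t).symm

theorem stmt_11 (n m k : ℕ) (b : Fin n → Fin k)
    (A : Fin m → Matrix (Fin n) (Fin n) ℝ)
    (hA : ∀ i, (A i).IsSymm) (hAb : ∀ i, IsBlockDiag b (A i))
    (t : ℕ)
    (V : Matrix (Fin n) (Fin n) ℝ)
    (hVsymm : V.IsSymm) (hVb : IsBlockDiag b V) (hV0 : V ≠ 0)
    (hVA : ∀ i, ((A i)ᵀ * V).trace = 0)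
    (hVm : sigmaMinus b V ≤ t) :
    ∃ X1 X2 : Matrix (Fin n) (Fin n) ℝ,
      X1 ≠ X2 ∧ X1.PosSemidef ∧ X2.PosSemidef ∧
      IsBlockDiag b X1 ∧ IsBlockDiag b X2 ∧
      sigmaPlus b X1 ≤ t ∧
      ∀ i, ((A i)ᵀ * X1).trace = ((A i)ᵀ * X2).trace := by
  classical
  set S : Set (Fin k) := {i : Fin k | ∃ x : Fin n → ℝ, (∀ j, b j ≠ i → x j = 0) ∧
    x ⬝ᵥ V.mulVec x < 0} with hS
  set c : ℝ := ∑ s, ∑ t, |V s t| with hc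
  have hc0 : 0 ≤ c :=
    Finset.sum_nonneg fun s _ => Finset.sum_nonneg fun t _ => abs_nonneg _
  set d : Fin n → ℝ := fun j => if b j ∈ S then c else 0 with hd
  have hd0 : ∀ j, 0 ≤ d j := by
    intro j; by_cases h : b j ∈ S <;> simp [hd, h, hc0]
  have hdiagquad : ∀ x : Fin n → ℝ,
      x ⬝ᵥ (Matrix.diagonal d) *ᵥ x = ∑ j, d j * x j ^ 2 := by
    intro x
    simp [dotProduct, mulVec_diagonal]
    exact Finset.sum_congr rfl fun j _ => by ring
  refine ⟨Matrix.diagonal d, Matrix.diagonal d + V, ?_, ?_, ?_, ?_, ?_, ?_, ?_⟩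
  · intro h
    exact hV0 (by simpa using (left_eq_add.mp h))
  · exact Matrix.posSemidef_diagonal_iff.mpr hd0
  · rw [Matrix.posSemidef_iff_dotProduct_mulVec]; constructor
    · exact (Matrix.isHermitian_diagonal d).add hVsymm
    · intro x
      have hsplit := quad_split b V hVb x
      set p : Fin k → Fin n → ℝ := fun i j => if b j = i then x j else 0 with hp
      have hlow : ∀ i : Fin k,
          (if i ∈ S then -(c * ∑ j, (p i j) ^ 2) else 0) ≤ (p i) ⬝ᵥ V *ᵥ (p i) := by
        intro i
        by_cases hiS : i ∈ S
        · simpa [hiS] using quad_lower V (p i)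
        · have h0 : ¬ ((p i) ⬝ᵥ V *ᵥ (p i) < 0) := by
            intro hlt
            exact hiS ⟨p i, fun j hj => by simp [hp, hj], hlt⟩
          simpa [hiS] using not_lt.mp h0
      have hsum : ∑ i : Fin k, (if i ∈ S then c * ∑ j, (p i j) ^ 2 else 0)
          = ∑ j, d j * x j ^ 2 := by
        have hswap : ∀ i : Fin k, (if i ∈ S then c * ∑ j, (p i j) ^ 2 else 0)
            = ∑ j, (if i ∈ S then c * (p i j) ^ 2 else 0) := by
          intro i; by_cases hiS : i ∈ S <;> simp [hiS, Finset.mul_sum]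
        rw [Finset.sum_congr rfl fun i _ => hswap i, Finset.sum_comm]
        apply Finset.sum_congr rfl; intro j _
        rw [Finset.sum_eq_single (b j)]
        · by_cases hbS : b j ∈ S <;> simp [hp, hd, hbS]
        · intro i _ hi
          have hpij : p i j = 0 := by
            simp [hp]; intro hh; exact absurd hh.symm hi
          simp [hpij]
        · simp
      have hle : ∑ i : Fin k, (if i ∈ S then -(c * ∑ j, (p i j) ^ 2) else 0)
          ≤ ∑ i : Fin k, (p i) ⬝ᵥ V *ᵥ (p i) :=
        Finset.sum_le_sum fun i _ => hlow i
      have hneg : ∑ i : Fin k, (if i ∈ S then -(c * ∑ j, (p i j) ^ 2) else 0)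
          = -(∑ j, d j * x j ^ 2) := by
        rw [← hsum, ← Finset.sum_neg_distrib]
        apply Finset.sum_congr rfl; intro i _
        by_cases hiS : i ∈ S <;> simp [hiS]
      have hfinal : x ⬝ᵥ (Matrix.diagonal d + V) *ᵥ x
          = (∑ j, d j * x j ^ 2) + ∑ i : Fin k, (p i) ⬝ᵥ V *ᵥ (p i) := by
        rw [add_mulVec, dotProduct_add, hdiagquad, hsplit]
      rw [star_trivial, hfinal]
      linarith [hle, hneg.symm.le]
  · intro s t hst
    exact Matrix.diagonal_apply_ne d fun h => hst (congrArg b h)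
  · intro s t hst
    simp [Matrix.add_apply, Matrix.diagonal_apply_ne d fun h => hst (congrArg b h),
      hVb s t hst]
  · apply le_trans _ hVm
    unfold sigmaPlus sigmaMinus
    apply Set.ncard_le_ncard _ (Set.toFinite _)
    intro i hi
    obtain ⟨x, hx, hpos⟩ := hi
    by_contra hiS
    rw [hdiagquad] at hpos
    have : ∀ j, d j * x j ^ 2 = 0 := by
      intro j
      by_cases hj : b j = i
      · have : d j = 0 := by simp [hd, hj]; intro h; exact absurd h hiS
        simp [this]
      · simp [hx j hj]
    simp [Finset.sum_congr rfl fun j _ => this j] at hpos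
  · intro i
    rw [mul_add, Matrix.trace_add, hVA, add_zero]
end

section
/- With A_0 = diag(0,-1,-1,-2), A_1 = diag(1,-1,-1,-1), A_2 = diag(0,-1,1,0) and blocks B_1={1}, B_2={2}, B_3={3,4}: the point x̃ = (1, 1/2, 1/2, 0) is a vertex of the alternative polyhedron {x ≥ 0 : ⟨diag(A_i), x⟩-constraints as in the alternative system}, its block support is {1,2,3}, but the block subsystem indexed by {1,3} of A(y) = A_0 - y_1A_1 - y_2A_2 ⪰ 0 is already infeasible. Hence the block support of a vertex of the alternative polyhedron need not be an IIS. -/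
open Matrix

theorem stmt_17 (A0 A1 A2 : Matrix (Fin 4) (Fin 4) ℝ)
    (hA0 : A0 = Matrix.diagonal ![0, -1, -1, -2])
    (hA1 : A1 = Matrix.diagonal ![1, -1, -1, -1])
    (hA2 : A2 = Matrix.diagonal ![0, -1, 1, 0])
    (b : Fin 4 → Fin 3) (hb : b = ![0, 1, 2, 2])
    (S : Set (Fin 4 → ℝ))
    (hS : S = {x | (∀ j, 0 ≤ x j) ∧
      (∑ j, A0 j j * x j) = -1 ∧
      (∑ j, A1 j j * x j) = 0 ∧
      (∑ j, A2 j j * x j) = 0})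
    (xt : Fin 4 → ℝ) (hxt : xt = ![1, 1/2, 1/2, 0]) :
    -- x̃ is a vertex (extreme point) of the alternative polyhedron,
    xt ∈ Set.extremePoints ℝ S ∧
    -- its block support is all three blocks {1,2,3},
    {i : Fin 3 | ∃ j, b j = i ∧ xt j ≠ 0} = Set.univ ∧
    -- yet the block subsystem indexed by blocks {1,3} is already infeasible:
    ¬ ∃ y : Fin 2 → ℝ, ∀ x : Fin 4 → ℝ, (∀ j, b j = 1 → x j = 0) →
        0 ≤ x ⬝ᵥ (A0 - y 0 • A1 - y 1 • A2).mulVec x := by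
  subst hA0 hA1 hA2 hb hS hxt
  refine ⟨⟨⟨?_, ?_, ?_, ?_⟩, ?_⟩, ?_, ?_⟩
  · intro j; fin_cases j <;> norm_num
  · norm_num [Fin.sum_univ_four, Matrix.diagonal, Matrix.cons_val_two, Matrix.cons_val_three]
  · norm_num [Fin.sum_univ_four, Matrix.diagonal, Matrix.cons_val_two, Matrix.cons_val_three]
  · norm_num [Fin.sum_univ_four, Matrix.diagonal, Matrix.cons_val_two, Matrix.cons_val_three]
  · rintro x1 ⟨h1p, h1a, h1b, h1c⟩ x2 ⟨h2p, h2a, h2b, h2c⟩ ⟨a, c, ha, hc, hac, hsum⟩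
    simp [Fin.sum_univ_four, Matrix.diagonal] at h1a h1b h1c h2a h2b h2c
    have e3 := congrFun hsum 3
    simp [Pi.add_apply, Pi.smul_apply] at e3
    have hx13 : x1 3 = 0 := by nlinarith [h1p 3, h2p 3, mul_pos ha hc]
    have hx23 : x2 3 = 0 := by nlinarith [h1p 3, h2p 3, mul_pos ha hc]
    · funext j; fin_cases j <;> simp <;> linarith
  · ext i
    simp only [Set.mem_setOf_eq, Set.mem_univ, iff_true]
    fin_cases i
    · exact ⟨0, rfl, by norm_num⟩
    · exact ⟨1, rfl, by norm_num⟩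
    · exact ⟨2, rfl, by norm_num [Matrix.cons_val_two]⟩
  · rintro ⟨y, hy⟩
    have h1 := hy ![1, 0, 0, 0] (by intro j hj; fin_cases j <;> simp_all)
    have h2 := hy ![0, 0, 0, 1] (by intro j hj; fin_cases j <;> simp_all)
    simp [dotProduct, Matrix.mulVec, Fin.sum_univ_four, Matrix.diagonal] at h1 h2
    linarith
end
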